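/- arXiv:1712.03649 — 9 statements merged into one kernel-verified Lean document; each statement's English description precedes it below -/
import Mathlib

section
/- Let G be a graph with chromatic index equal to its maximum degree Δ(G). If there exists a vertex x of G fixed by every automorphism of G, and G is connected, then the distinguishing chromatic index of G equals Δ(G). -/
open SimpleGraph

/-- Two edges (as unordered pairs) are adjacent if they are distinct and share an endpoint. -/
def EdgesAdj {V : Type*} (e f : Sym2 V) : Prop := e ≠ f ∧ ∃ v, v ∈ e ∧ v ∈ f

/-- A proper edge labeling: adjacent edges of `G` receive different labels. -/
def IsProperEdgeLabeling {V : Type*} (G : SimpleGraph V) (c : Sym2 V → ℕ) : Prop :=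
  ∀ e ∈ G.edgeSet, ∀ f ∈ G.edgeSet, EdgesAdj e f → c e ≠ c f

/-- An automorphism `φ` of `G` preserves the edge labeling `c`. -/
def PreservesEdgeLabeling {V : Type*} (G : SimpleGraph V) (φ : G ≃g G) (c : Sym2 V → ℕ) : Prop :=
  ∀ e ∈ G.edgeSet, c (Sym2.map φ e) = c e

/-- A distinguishing edge labeling: only the identity automorphism preserves it. -/
def IsDistinguishingEdgeLabeling {V : Type*} (G : SimpleGraph V) (c : Sym2 V → ℕ) : Prop :=
  ∀ φ : G ≃g G, PreservesEdgeLabeling G φ c → ∀ v, φ v = v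

/-- The chromatic index `χ'(G)`. -/
noncomputable def chromIndex {V : Type*} (G : SimpleGraph V) : ℕ :=
  sInf {d | ∃ c : Sym2 V → ℕ, IsProperEdgeLabeling G c ∧ ∀ e ∈ G.edgeSet, c e < d}

/-- The distinguishing index `D'(G)`. -/
noncomputable def distIndex {V : Type*} (G : SimpleGraph V) : ℕ :=
  sInf {d | ∃ c : Sym2 V → ℕ, IsDistinguishingEdgeLabeling G c ∧ ∀ e ∈ G.edgeSet, c e < d}

/-- The distinguishing chromatic index `χ'_D(G)`. -/
noncomputable def distChromIndex {V : Type*} (G : SimpleGraph V) : ℕ :=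
  sInf {d | ∃ c : Sym2 V → ℕ, IsProperEdgeLabeling G c ∧ IsDistinguishingEdgeLabeling G c ∧
      ∀ e ∈ G.edgeSet, c e < d}

theorem stmt2 {V : Type*} [Fintype V] (G : SimpleGraph V) [DecidableRel G.Adj]
    (hconn : G.Connected) (hclass1 : chromIndex G = G.maxDegree)
    (hfix : ∃ x : V, ∀ φ : G ≃g G, φ x = x) :
    distChromIndex G = G.maxDegree := by
  obtain ⟨x, hx⟩ := hfix
  -- Any proper edge labeling is distinguishing, thanks to the fixed vertex.
  have key : ∀ c : Sym2 V → ℕ, IsProperEdgeLabeling G c → IsDistinguishingEdgeLabeling G c := by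
    intro c hc φ hφ v
    have step : ∀ u w : V, G.Adj u w → φ u = u → φ w = w := by
      intro u w huw hu
      have he : s(u, w) ∈ G.edgeSet := huw
      have hadj : G.Adj u (φ w) := by
        have := φ.map_adj_iff.mpr huw
        rwa [hu] at this
      have he' : s(u, φ w) ∈ G.edgeSet := hadj
      have hcol : c s(u, φ w) = c s(u, w) := by
        have := hφ s(u, w) he
        rwa [Sym2.map_pair_eq, hu] at this
      by_contra hne
      have hne' : s(u, φ w) ≠ s(u, w) := fun h => hne (Sym2.congr_right.mp h)
      exact hc _ he' _ he ⟨hne', u, by simp, by simp⟩ hcol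
    have aux : ∀ {a b : V} (_ : G.Walk a b), φ a = a → φ b = b := by
      intro a b p
      induction p with
      | nil => exact fun h => h
      | cons h _ ih => exact fun ha => ih (step _ _ h ha)
    obtain ⟨p⟩ := hconn.preconnected x v
    exact aux p (hx φ)
  have hset : {d | ∃ c : Sym2 V → ℕ, IsProperEdgeLabeling G c ∧ IsDistinguishingEdgeLabeling G c ∧
      ∀ e ∈ G.edgeSet, c e < d} = {d | ∃ c : Sym2 V → ℕ, IsProperEdgeLabeling G c ∧
      ∀ e ∈ G.edgeSet, c e < d} := by
    ext d
    constructor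
    · rintro ⟨c, hc, _, hb⟩; exact ⟨c, hc, hb⟩
    · rintro ⟨c, hc, hb⟩; exact ⟨c, hc, key c hc, hb⟩
  rw [distChromIndex, hset, ← chromIndex, hclass1]
end

section
/- The distinguishing chromatic index of the complete bipartite graph K_{s,t} with s > t ≥ 1 is s. -/
open SimpleGraph

/-- The candidate labeling: edge `{inl i, inr j}` gets label `(i+j) % s`. -/
def bipLab (s t : ℕ) : Sym2 (Fin s ⊕ Fin t) → ℕ :=
  Sym2.lift ⟨fun u v => (Sum.elim Fin.val Fin.val u + Sum.elim Fin.val Fin.val v) % s,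
    by intro u v; simp [Nat.add_comm]⟩

lemma bipLab_pair (s t : ℕ) (i : Fin s) (j : Fin t) :
    bipLab s t s(Sum.inl i, Sum.inr j) = ((i : ℕ) + (j : ℕ)) % s := by
  simp [bipLab]

lemma cancel_mod {s x a b : ℕ} (ha : a < s) (hb : b < s)
    (h : (x + a) % s = (x + b) % s) : a = b := by
  have h2 : a % s = b % s := Nat.ModEq.add_left_cancel' x h
  rwa [Nat.mod_eq_of_lt ha, Nat.mod_eq_of_lt hb] at h2

lemma edge_form {s t : ℕ} (e : Sym2 (Fin s ⊕ Fin t))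
    (he : e ∈ (completeBipartiteGraph (Fin s) (Fin t)).edgeSet) :
    ∃ i j, e = s(Sum.inl i, Sum.inr j) := by
  induction e using Sym2.ind with
  | _ a b =>
    rw [SimpleGraph.mem_edgeSet] at he
    rcases a with i | j <;> rcases b with i' | j'
    · simp at he
    · exact ⟨i, j', rfl⟩
    · exact ⟨i', j, Sym2.eq_swap⟩
    · simp at he

lemma bipLab_proper (s t : ℕ) (ht : 1 ≤ t) (hst : t < s) :
    IsProperEdgeLabeling (completeBipartiteGraph (Fin s) (Fin t)) (bipLab s t) := by
  rintro e he f hf ⟨hne, v, hv1, hv2⟩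
  obtain ⟨i, j, rfl⟩ := edge_form e he
  obtain ⟨i', j', rfl⟩ := edge_form f hf
  rw [bipLab_pair, bipLab_pair]
  rw [Sym2.mem_iff] at hv1 hv2
  rcases hv1 with h1 | h1 <;> rcases hv2 with h2 | h2
  · -- shared left endpoint
    subst h1
    obtain rfl : i = i' := Sum.inl_injective h2
    intro hc
    have hj : (j : ℕ) = j' :=
      cancel_mod (lt_trans j.isLt hst) (lt_trans j'.isLt hst) hc
    exact hne (by rw [Fin.ext hj])
  · subst h1; exact absurd h2 (by simp)
  · subst h1; exact absurd h2.symm (by simp)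
  · -- shared right endpoint
    subst h1
    obtain rfl : j = j' := Sum.inr_injective h2
    intro hc
    rw [Nat.add_comm (i:ℕ), Nat.add_comm (i':ℕ)] at hc
    have hi : (i : ℕ) = i' := cancel_mod i.isLt i'.isLt hc
    exact hne (by rw [Fin.ext hi])

lemma caseB {s t a b x : ℕ} (hst : t < s) (hb1 : 1 ≤ b) (hbt : b < t)
    (hab : a + b = s) (hx : x < t) (h : (a + x) % s = t - b) : False := by
  rcases Nat.lt_or_ge x b with hlt | hge
  · rw [Nat.mod_eq_of_lt (by omega)] at h
    omega
  · have heq : a + x = s + (x - b) := by omega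
    rw [heq, Nat.add_mod_left, Nat.mod_eq_of_lt (by omega)] at h
    omega

lemma bipLab_dist (s t : ℕ) (ht : 1 ≤ t) (hst : t < s) :
    IsDistinguishingEdgeLabeling (completeBipartiteGraph (Fin s) (Fin t)) (bipLab s t) := by
  intro φ hpres
  -- every left vertex maps to a left vertex
  have hL : ∀ i : Fin s, ∃ a, φ (Sum.inl i) = Sum.inl a := by
    by_contra h
    push_neg at h
    obtain ⟨i, hi⟩ := h
    obtain ⟨b, hb⟩ : ∃ b, φ (Sum.inl i) = Sum.inr b := by
      cases hφ : φ (Sum.inl i) with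
      | inl a => exact absurd hφ (hi a)
      | inr b => exact ⟨b, rfl⟩
    have hall : ∀ i' : Fin s, ∃ b', φ (Sum.inl i') = Sum.inr b' := by
      intro i'
      cases hφ' : φ (Sum.inl i') with
      | inr b' => exact ⟨b', rfl⟩
      | inl a' =>
        exfalso
        have hnadj : ¬ (completeBipartiteGraph (Fin s) (Fin t)).Adj (Sum.inl i) (Sum.inl i') := by simp
        have hnadj2 : ¬ (completeBipartiteGraph (Fin s) (Fin t)).Adj (φ (Sum.inl i)) (φ (Sum.inl i')) :=
          fun hc => hnadj (φ.map_rel_iff.mp hc)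
        rw [hb, hφ'] at hnadj2
        exact hnadj2 (by simp)
    choose b' hb' using hall
    have hinj : Function.Injective b' := by
      intro x y hxy
      have hxy2 : φ (Sum.inl x) = φ (Sum.inl y) := by rw [hb' x, hb' y, hxy]
      exact Sum.inl_injective (φ.injective hxy2)
    have := Fintype.card_le_of_injective b' hinj
    simp at this; omega
  have hR : ∀ j : Fin t, ∃ b, φ (Sum.inr j) = Sum.inr b := by
    intro j
    cases hφ : φ (Sum.inr j) with
    | inr b => exact ⟨b, rfl⟩
    | inl a =>
      exfalso
      obtain ⟨a0, ha0⟩ := hL ⟨0, by omega⟩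
      have hadj : (completeBipartiteGraph (Fin s) (Fin t)).Adj (Sum.inl (⟨0, by omega⟩ : Fin s)) (Sum.inr j) := by simp
      have h2 : (completeBipartiteGraph (Fin s) (Fin t)).Adj (φ (Sum.inl (⟨0, by omega⟩ : Fin s))) (φ (Sum.inr j)) :=
        φ.map_rel_iff.mpr hadj
      rw [ha0, hφ] at h2
      simp at h2
  choose σ hσ using hL
  choose τ hτ using hR
  have key : ∀ (i : Fin s) (j : Fin t),
      ((σ i : ℕ) + (τ j : ℕ)) % s = ((i : ℕ) + (j : ℕ)) % s := by
    intro i j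
    have he : s(Sum.inl i, Sum.inr j) ∈ (completeBipartiteGraph (Fin s) (Fin t)).edgeSet := by
      rw [SimpleGraph.mem_edgeSet]; simp
    have hp := hpres _ he
    rw [Sym2.map_pair_eq, hσ, hτ, bipLab_pair, bipLab_pair] at hp
    exact hp
  have hs0 : 0 < s := by omega
  obtain ⟨i0, hi0⟩ : ∃ i : Fin s, (i : ℕ) = 0 := ⟨⟨0, hs0⟩, rfl⟩
  obtain ⟨j0, hj0⟩ : ∃ j : Fin t, (j : ℕ) = 0 := ⟨⟨0, ht⟩, rfl⟩
  have h00 := key i0 j0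
  rw [hi0, hj0] at h00
  have hσlt : (σ i0 : ℕ) < s := Fin.isLt _
  have hτlt : (τ j0 : ℕ) < t := Fin.isLt _
  have hsum : (σ i0 : ℕ) + (τ j0 : ℕ) = 0 ∨ (σ i0 : ℕ) + (τ j0 : ℕ) = s := by
    have hz : ((σ i0 : ℕ) + (τ j0 : ℕ)) % s = 0 := by
      rw [h00]; simp
    obtain ⟨k, hk⟩ := Nat.dvd_of_mod_eq_zero hz
    have hk2 : k < 2 := by nlinarith
    interval_cases k <;> omega
  rcases hsum with hsum | hsum
  · -- identity case
    have hσ0 : (σ i0 : ℕ) = 0 := by omega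
    have hτ0 : (τ j0 : ℕ) = 0 := by omega
    have hτid : ∀ j : Fin t, τ j = j := by
      intro j
      have h := key i0 j
      rw [hi0, hσ0] at h
      simp only [Nat.zero_add] at h
      rw [Nat.mod_eq_of_lt (lt_trans (Fin.isLt _) hst),
        Nat.mod_eq_of_lt (lt_trans (Fin.isLt _) hst)] at h
      exact Fin.ext h
    have hσid : ∀ i : Fin s, σ i = i := by
      intro i
      have h := key i j0
      rw [hj0, hτ0] at h
      simp only [Nat.add_zero] at h
      rw [Nat.mod_eq_of_lt (Fin.isLt _), Nat.mod_eq_of_lt (Fin.isLt _)] at h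
      exact Fin.ext h
    intro v
    cases v with
    | inl i => rw [hσ i, hσid i]
    | inr j => rw [hτ j, hτid j]
  · -- impossible case: σ 0 + τ 0 = s
    exfalso
    have hτ0pos : 1 ≤ (τ j0 : ℕ) := by omega
    obtain ⟨jj, hjj⟩ : ∃ j : Fin t, (j : ℕ) = t - (τ j0 : ℕ) := ⟨⟨_, by omega⟩, rfl⟩
    have h := key i0 jj
    rw [hi0, hjj] at h
    simp only [Nat.zero_add] at h
    have h2 : ((σ i0 : ℕ) + (τ jj : ℕ)) % s = t - (τ j0 : ℕ) := by
      rw [h]; exact Nat.mod_eq_of_lt (by omega)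
    exact caseB hst hτ0pos hτlt hsum (Fin.isLt (τ jj)) h2

theorem stmt4 (s t : ℕ) (ht : 1 ≤ t) (hst : t < s) :
    distChromIndex (completeBipartiteGraph (Fin s) (Fin t)) = s := by
  have hs0 : 0 < s := by omega
  set G := completeBipartiteGraph (Fin s) (Fin t) with hG
  have hmem : s ∈ {d | ∃ c : Sym2 (Fin s ⊕ Fin t) → ℕ,
      IsProperEdgeLabeling G c ∧ IsDistinguishingEdgeLabeling G c ∧
      ∀ e ∈ G.edgeSet, c e < d} := by
    refine ⟨bipLab s t, bipLab_proper s t ht hst, bipLab_dist s t ht hst, ?_⟩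
    intro e he
    obtain ⟨i, j, rfl⟩ := edge_form e he
    rw [bipLab_pair]
    exact Nat.mod_lt _ hs0
  have hlb : ∀ d ∈ {d | ∃ c : Sym2 (Fin s ⊕ Fin t) → ℕ,
      IsProperEdgeLabeling G c ∧ IsDistinguishingEdgeLabeling G c ∧
      ∀ e ∈ G.edgeSet, c e < d}, s ≤ d := by
    rintro d ⟨c, hprop, -, hlt⟩
    have hedge : ∀ i : Fin s, s(Sum.inl i, Sum.inr (⟨0, ht⟩ : Fin t)) ∈ G.edgeSet := by
      intro i; rw [SimpleGraph.mem_edgeSet]; simp [hG]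
    have hF : Function.Injective
        (fun i : Fin s => (⟨c s(Sum.inl i, Sum.inr (⟨0, ht⟩ : Fin t)),
          hlt _ (hedge i)⟩ : Fin d)) := by
      intro x y hxy
      by_contra hne
      have hne' : s(Sum.inl x, Sum.inr (⟨0, ht⟩ : Fin t))
          ≠ s(Sum.inl y, Sum.inr (⟨0, ht⟩ : Fin t)) := by
        intro hc
        rcases Sym2.eq_iff.mp hc with ⟨h1, -⟩ | ⟨h1, -⟩
        · exact hne (Sum.inl_injective h1)
        · exact Sum.inl_ne_inr h1
      have hadj : EdgesAdj s(Sum.inl x, Sum.inr (⟨0, ht⟩ : Fin t))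
          s(Sum.inl y, Sum.inr (⟨0, ht⟩ : Fin t)) :=
        ⟨hne', Sum.inr ⟨0, ht⟩, by simp, by simp⟩
      exact hprop _ (hedge x) _ (hedge y) hadj (congrArg Fin.val hxy)
    have := Fintype.card_le_of_injective _ hF
    simpa using this
  exact le_antisymm (Nat.sInf_le hmem) (le_csInf ⟨s, hmem⟩ hlb)
end

section
/- The distinguishing chromatic index of the path P_{2n} on 2n vertices (n ≥ 2) is 3. -/
open SimpleGraph

namespace Stmt5Aux

/-- The `i`-th edge of the path graph. -/
def E (N i : ℕ) (h : i + 1 < N) : Sym2 (Fin N) :=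
  s(⟨i, by omega⟩, ⟨i + 1, h⟩)

lemma E_mem {N i : ℕ} (h : i + 1 < N) : E N i h ∈ (pathGraph N).edgeSet := by
  rw [E, mem_edgeSet, pathGraph_adj]; left; rfl

lemma E_inj {N i j : ℕ} {hi : i + 1 < N} {hj : j + 1 < N} (h : E N i hi = E N j hj) :
    i = j := by
  rw [E, E, Sym2.eq_iff] at h
  rcases h with ⟨h1, _⟩ | ⟨h1, h2⟩
  · exact congrArg Fin.val h1
  · have := congrArg Fin.val h1
    have := congrArg Fin.val h2
    simp at *; omega

lemma mem_E {N i : ℕ} {h : i + 1 < N} {v : Fin N} (hv : v ∈ E N i h) :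
    v.val = i ∨ v.val = i + 1 := by
  rw [E, Sym2.mem_iff] at hv
  rcases hv with rfl | rfl
  · left; rfl
  · right; rfl

lemma edge_form {N : ℕ} {e : Sym2 (Fin N)} (he : e ∈ (pathGraph N).edgeSet) :
    ∃ i, ∃ h : i + 1 < N, e = E N i h := by
  induction e with
  | _ a b =>
    rw [mem_edgeSet, pathGraph_adj] at he
    rcases he with h | h
    · refine ⟨a.val, by omega, ?_⟩
      rw [E, Sym2.eq_iff]
      exact Or.inl ⟨Fin.ext rfl, Fin.ext h.symm⟩
    · refine ⟨b.val, by omega, ?_⟩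
      rw [E, Sym2.eq_iff]
      exact Or.inr ⟨Fin.ext h.symm, Fin.ext rfl⟩

/-- The label of the `i`-th edge. -/
def L (i : ℕ) : ℕ := if i = 0 then 2 else i % 2

/-- The distinguishing proper 3-labeling. -/
def myc (N : ℕ) : Sym2 (Fin N) → ℕ :=
  Sym2.lift ⟨fun a b => L (min a.val b.val), fun a b => by show L (min a.val b.val) = L (min b.val a.val); rw [min_comm]⟩

lemma myc_E {N i : ℕ} (h : i + 1 < N) : myc N (E N i h) = L i := by
  simp only [myc, E, Sym2.lift_mk]
  congr 1
  show min i (i+1) = i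
  omega

lemma myc_proper (N : ℕ) : IsProperEdgeLabeling (pathGraph N) (myc N) := by
  intro e he f hf ⟨hne, v, hv1, hv2⟩
  obtain ⟨i, hi, rfl⟩ := edge_form he
  obtain ⟨j, hj, rfl⟩ := edge_form hf
  have hij : i ≠ j := fun h => hne (by subst h; rfl)
  have h1 := mem_E hv1
  have h2 := mem_E hv2
  rw [myc_E, myc_E]
  unfold L
  split_ifs <;> omega

lemma rev_fin {N : ℕ} (i : Fin N) : (Fin.rev i).val = N - 1 - i.val := by
  rw [Fin.val_rev]; omega

/-- The reversal automorphism of the path graph. -/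
def revIso (N : ℕ) : pathGraph N ≃g pathGraph N where
  toEquiv := Fin.revPerm
  map_rel_iff' := by
    intro a b
    have ha := a.isLt
    have hb := b.isLt
    simp only [Fin.revPerm_apply, pathGraph_adj, Fin.val_rev]
    omega

lemma map_E {N : ℕ} (φ : pathGraph N ≃g pathGraph N) {i : ℕ} (h : i + 1 < N) :
    Sym2.map φ (E N i h) = s(φ ⟨i, by omega⟩, φ ⟨i + 1, h⟩) := by
  rw [E, Sym2.map_pair_eq]

lemma myc_disting (N : ℕ) (hN : 4 ≤ N) :
    IsDistinguishingEdgeLabeling (pathGraph N) (myc N) := by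
  intro φ hφ v
  have h01 : (0 : ℕ) + 1 < N := by omega
  -- the image of edge 0 has label 2, hence is edge 0
  have hmem : Sym2.map φ (E N 0 h01) ∈ (pathGraph N).edgeSet := by
    rw [map_E, mem_edgeSet]
    exact φ.map_rel_iff.mpr (by rw [pathGraph_adj]; left; rfl)
  obtain ⟨k, hk, hEk⟩ := edge_form hmem
  have hval : myc N (E N k hk) = 2 := by
    rw [← hEk, hφ _ (E_mem h01), myc_E]; rfl
  rw [myc_E] at hval
  have hk0 : k = 0 := by unfold L at hval; split_ifs at hval <;> omega
  subst hk0
  rw [map_E] at hEk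
  rw [E, Sym2.eq_iff] at hEk
  have hinj : Function.Injective φ := φ.toEquiv.injective
  have h0 : φ ⟨0, by omega⟩ = ⟨0, by omega⟩ ∧ φ ⟨1, by omega⟩ = ⟨1, by omega⟩ := by
    rcases hEk with h | ⟨h1, h2⟩
    · exact h
    · -- swap case: contradiction using vertex 2
      exfalso
      have hadj : (pathGraph N).Adj ⟨1, by omega⟩ ⟨2, by omega⟩ := by
        rw [pathGraph_adj]; left; rfl
      have := φ.map_rel_iff.mpr hadj
      rw [h2, pathGraph_adj] at this
      simp only at this
      have hv2 : (φ ⟨2, by omega⟩).val = 1 := by omega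
      have : φ ⟨2, by omega⟩ = φ ⟨0, by omega⟩ := by
        rw [h1]; exact Fin.ext hv2
      have := hinj this
      have := congrArg Fin.val this
      simp at this
  have key : ∀ k, ∀ hk : k < N, φ ⟨k, hk⟩ = ⟨k, hk⟩ := by
    intro k
    induction k using Nat.strong_induction_on with
    | _ k ih =>
      intro hk
      match k, hk with
      | 0, hk => exact h0.1
      | 1, hk => exact h0.2
      | (m+2), hk =>
        have hm1 : m + 1 < N := by omega
        have hadj : (pathGraph N).Adj ⟨m+1, hm1⟩ ⟨m+2, hk⟩ := by
          rw [pathGraph_adj]; left; rfl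
        have hA := φ.map_rel_iff.mpr hadj
        rw [ih (m+1) (by omega) hm1, pathGraph_adj] at hA
        simp only at hA
        have : (φ ⟨m+2, hk⟩).val = m + 2 ∨ (φ ⟨m+2, hk⟩).val = m := by omega
        rcases this with h | h
        · exact Fin.ext h
        · exfalso
          have hm : m < N := by omega
          have : φ ⟨m+2, hk⟩ = φ ⟨m, hm⟩ := by
            rw [ih m (by omega) hm]; exact Fin.ext h
          have := congrArg Fin.val (hinj this)
          simp at this
  have := key v.val v.isLt
  simpa using this

lemma no_two_labeling {N : ℕ} (hN : 4 ≤ N) (hNe : N % 2 = 0) {m : ℕ} (hm : m ≤ 2)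
    {c : Sym2 (Fin N) → ℕ} (hp : IsProperEdgeLabeling (pathGraph N) c)
    (hd : IsDistinguishingEdgeLabeling (pathGraph N) c)
    (hb : ∀ e ∈ (pathGraph N).edgeSet, c e < m) : False := by
  have h01 : (0 : ℕ) + 1 < N := by omega
  set c0 := c (E N 0 h01) with hc0
  -- the labeling alternates
  have alt : ∀ i, ∀ h : i + 1 < N, c (E N i h) = (c0 + i) % 2 := by
    intro i
    induction i with
    | zero =>
      intro h
      have := hb _ (E_mem h)
      have heq : E N 0 h = E N 0 h01 := rfl
      rw [heq, ← hc0]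
      omega
    | succ i ih =>
      intro h
      have hi : i + 1 < N := by omega
      have hne : E N i hi ≠ E N (i+1) h := fun hq => by have := E_inj hq; omega
      have hadj : EdgesAdj (E N i hi) (E N (i+1) h) := by
        refine ⟨hne, ⟨i+1, by omega⟩, ?_, ?_⟩
        · rw [E, Sym2.mem_iff]; right; rfl
        · rw [E, Sym2.mem_iff]; left; rfl
      have hne' := hp _ (E_mem hi) _ (E_mem h) hadj
      have hb1 := hb _ (E_mem hi)
      have hb2 := hb _ (E_mem h)
      have := ih hi
      omega
  -- the reversal preserves c
  have hpres : PreservesEdgeLabeling (pathGraph N) (revIso N) c := by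
    intro e he
    obtain ⟨i, hi, rfl⟩ := edge_form he
    have hrev : Sym2.map (revIso N) (E N i hi) = E N (N - 2 - i) (by omega) := by
      rw [map_E, E, Sym2.eq_swap, Sym2.eq_iff]
      left
      constructor <;> · apply Fin.ext; simp [revIso, rev_fin]; omega
    rw [hrev, alt _ _, alt _ hi]
    omega
  have := hd (revIso N) hpres ⟨0, by omega⟩
  have := congrArg Fin.val this
  rw [show ((revIso N) ⟨0, by omega⟩).val = N - 1 by simp [revIso, rev_fin]] at this
  simp at this
  omega

end Stmt5Aux

open Stmt5Aux
theorem stmt5 (n : ℕ) (hn : 2 ≤ n) :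
    distChromIndex (SimpleGraph.pathGraph (2 * n)) = 3 := by
  have hN : 4 ≤ 2 * n := by omega
  have hNe : (2 * n) % 2 = 0 := by omega
  have h3 : 3 ∈ {d | ∃ c : Sym2 (Fin (2*n)) → ℕ,
      IsProperEdgeLabeling (pathGraph (2*n)) c ∧
      IsDistinguishingEdgeLabeling (pathGraph (2*n)) c ∧
      ∀ e ∈ (pathGraph (2*n)).edgeSet, c e < 3} := by
    refine ⟨myc (2*n), myc_proper _, myc_disting _ hN, ?_⟩
    intro e he
    obtain ⟨i, hi, rfl⟩ := edge_form he
    rw [myc_E]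
    unfold L
    split_ifs <;> omega
  rw [distChromIndex]
  refine le_antisymm (Nat.sInf_le h3) (le_csInf ⟨3, h3⟩ ?_)
  rintro b ⟨c, hp, hd, hb⟩
  by_contra hlt
  push_neg at hlt
  exact no_two_labeling hN hNe (by omega) hp hd hb
end

section
/- The distinguishing chromatic index of the cycle C_{2n} is 3 for every n ≥ 4. -/
open SimpleGraph

/-! A proper labeling of `C_{2n}` with two labels alternates, so it is invariant under the
rotation by two; hence at least three labels are needed. Conversely, every automorphism of a
cycle is a rotation `v ↦ a + v` or a reflection `v ↦ a - v` (a non-backtracking walk with unit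
steps is a straight line), and the labeling `0 1 2 0 1 2 0 1 0 1 … 0 1` is preserved by neither
unless it is the identity. -/

open Fin.CommRing

lemma distChromIndex_eq_succ {V : Type*} {G : SimpleGraph V} {d : ℕ} {c : Sym2 V → ℕ}
    (hc : IsProperEdgeLabeling G c) (hd : IsDistinguishingEdgeLabeling G c)
    (hlt : ∀ e ∈ G.edgeSet, c e < d + 1)
    (hmin : ∀ c, IsProperEdgeLabeling G c → IsDistinguishingEdgeLabeling G c →
      ¬ ∀ e ∈ G.edgeSet, c e < d) :
    distChromIndex G = d + 1 := by
  refine le_antisymm (Nat.sInf_le ⟨c, hc, hd, hlt⟩) (le_csInf ⟨_, c, hc, hd, hlt⟩ ?_)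
  rintro b ⟨c', hc', hd', hlt'⟩
  by_contra! hb
  exact hmin c' hc' hd' fun e he => (hlt' e he).trans_le (by omega)

lemma eq_add_nsmul_of_forall_step {G : Type*} [AddCommGroup G] {g : ℕ → G} {d : G}
    (hstep : ∀ k, g (k + 1) = g k + d ∨ g (k + 1) = g k - d)
    (hback : ∀ k, g (k + 2) ≠ g k) (h1 : g 1 = g 0 + d) (k : ℕ) : g k = g 0 + k • d := by
  induction k using Nat.twoStepInduction with
  | zero => simp
  | one => simpa using h1
  | more k ihk ihk1 =>
    rcases hstep (k + 1) with h | h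
    · rw [h, ihk1]; module
    · refine absurd ?_ (hback k)
      rw [h, ihk1, ihk]; module

section Cycle

variable {m : ℕ} [NeZero m]

lemma Fin.ofNat_val_of_lt (k : ℕ) [k.AtLeastTwo] (hk : k < m) :
    (OfNat.ofNat k : Fin m).val = k := by
  simp only [Fin.coe_ofNat_eq_mod]
  exact Nat.mod_eq_of_lt hk

lemma Fin.ofNat_ne_zero_of_lt (k : ℕ) [k.AtLeastTwo] (hk : k < m) :
    (OfNat.ofNat k : Fin m) ≠ 0 := by
  rw [Ne, Fin.ext_iff, Fin.ofNat_val_of_lt k hk, Fin.val_zero]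
  have := Nat.AtLeastTwo.prop (n := k)
  omega

lemma cycleGraph_adj_iff (hm : 2 ≤ m) {u v : Fin m} :
    (cycleGraph m).Adj u v ↔ v = u + 1 ∨ v = u - 1 := by
  have h1 : (1 : Fin m).val = 1 := by rw [Fin.val_one']; exact Nat.mod_eq_of_lt hm
  rw [cycleGraph_adj', ← h1, Fin.val_inj, Fin.val_inj, sub_eq_iff_eq_add', sub_eq_iff_eq_add',
    eq_sub_iff_add_eq, or_comm, eq_comm (a := u)]

lemma cycleGraph_edge_mem (hm : 2 ≤ m) (i : Fin m) : s(i, i + 1) ∈ (cycleGraph m).edgeSet :=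
  (cycleGraph_adj_iff hm).2 (.inl rfl)

lemma exists_eq_of_mem_edgeSet_cycleGraph (hm : 2 ≤ m) {e : Sym2 (Fin m)}
    (he : e ∈ (cycleGraph m).edgeSet) : ∃ i, e = s(i, i + 1) := by
  induction e with
  | _ u v =>
    rw [SimpleGraph.mem_edgeSet] at he
    rcases (cycleGraph_adj_iff hm).1 he with rfl | rfl
    · exact ⟨u, rfl⟩
    · exact ⟨u - 1, by rw [sub_add_cancel, Sym2.eq_swap]⟩

lemma Fin.add_one_add_one_ne_self (hm : 3 ≤ m) (i : Fin m) : i + 1 + 1 ≠ i := by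
  rw [add_assoc, Ne, add_eq_left, one_add_one_eq_two]
  exact Fin.ofNat_ne_zero_of_lt 2 (by omega)

lemma sym2_mk_add_one_injective (hm : 3 ≤ m) :
    Function.Injective fun i : Fin m => s(i, i + 1) := by
  intro i j hij
  rcases Sym2.eq_iff.1 hij with ⟨h, -⟩ | ⟨rfl, h⟩
  · exact h
  · exact absurd h (Fin.add_one_add_one_ne_self hm j)

lemma edgesAdj_add_one (hm : 3 ≤ m) (i : Fin m) : EdgesAdj s(i, i + 1) s(i + 1, i + 1 + 1) :=
  ⟨fun h => Fin.add_one_add_one_ne_self hm i (by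
    have hi := sym2_mk_add_one_injective hm h
    rw [← hi, ← hi]), i + 1, by simp, by simp⟩

lemma cycleGraph_iso_eq_add_or_eq_sub (hm : 3 ≤ m) (φ : cycleGraph m ≃g cycleGraph m) :
    (∀ v, φ v = φ 0 + v) ∨ (∀ v, φ v = φ 0 - v) := by
  have hstep (v : Fin m) : φ (v + 1) = φ v + 1 ∨ φ (v + 1) = φ v - 1 :=
    (cycleGraph_adj_iff (by omega)).1 <|
      φ.map_adj_iff.2 ((cycleGraph_adj_iff (by omega)).2 (.inl rfl))
  set g : ℕ → Fin m := fun k => φ k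
  have hgstep (k : ℕ) : g (k + 1) = g k + 1 ∨ g (k + 1) = g k - 1 := by
    simpa only [g, Nat.cast_succ] using hstep k
  have hback (k : ℕ) : g (k + 2) ≠ g k := by
    simp only [g, Nat.cast_add, ← one_add_one_eq_two, ← add_assoc]
    exact φ.injective.ne (Fin.add_one_add_one_ne_self hm k)
  have hcast (v : Fin m) : φ v = g v.val := by simp only [g, Fin.cast_val_eq_self]
  rcases hgstep 0 with h1 | h1
  · left
    intro v
    rw [hcast, eq_add_nsmul_of_forall_step hgstep hback h1, Nat.smul_one_eq_cast]
    simp [g]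
  · right
    intro v
    have hgstep' (k : ℕ) : g (k + 1) = g k + -1 ∨ g (k + 1) = g k - -1 := by
      rw [← sub_eq_add_neg, sub_neg_eq_add, or_comm]; exact hgstep k
    rw [hcast, eq_add_nsmul_of_forall_step hgstep' hback (by rw [h1, sub_eq_add_neg]),
      smul_neg, Nat.smul_one_eq_cast, ← sub_eq_add_neg]
    simp [g]

def cycleGraphRotation (k : Fin m) : cycleGraph m ≃g cycleGraph m where
  toEquiv := Equiv.addRight k
  map_rel_iff' := by simp [cycleGraph_adj']

lemma not_isDistinguishingEdgeLabeling_of_lt_two (hm : 3 ≤ m) {c : Sym2 (Fin m) → ℕ}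
    (hc : IsProperEdgeLabeling (cycleGraph m) c) (hlt : ∀ e ∈ (cycleGraph m).edgeSet, c e < 2) :
    ¬ IsDistinguishingEdgeLabeling (cycleGraph m) c := by
  have hmem := cycleGraph_edge_mem (m := m) (by omega)
  have halt (i : Fin m) : c s(i + 1 + 1, i + 1 + 1 + 1) = c s(i, i + 1) := by
    have h01 := hc _ (hmem i) _ (hmem (i + 1)) (edgesAdj_add_one hm i)
    have h12 := hc _ (hmem (i + 1)) _ (hmem (i + 1 + 1)) (edgesAdj_add_one hm (i + 1))
    have := hlt _ (hmem i); have := hlt _ (hmem (i + 1)); have := hlt _ (hmem (i + 1 + 1))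
    omega
  intro hd
  have hpres : PreservesEdgeLabeling (cycleGraph m) (cycleGraphRotation (1 + 1)) c := by
    intro e he
    obtain ⟨i, rfl⟩ := exists_eq_of_mem_edgeSet_cycleGraph (by omega) he
    simpa [cycleGraphRotation, add_assoc] using halt i
  have h0 := hd _ hpres 0
  simp only [cycleGraphRotation] at h0
  exact Fin.add_one_add_one_ne_self hm 0 (by simpa [add_assoc] using h0)

open Classical in
noncomputable def cycleEdgeLabel (f : Fin m → ℕ) (e : Sym2 (Fin m)) : ℕ :=
  if h : ∃ i, e = s(i, i + 1) then f h.choose else 0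

lemma cycleEdgeLabel_mk (hm : 3 ≤ m) (f : Fin m → ℕ) (i : Fin m) :
    cycleEdgeLabel f s(i, i + 1) = f i := by
  have h : ∃ j, s(i, i + 1) = s(j, j + 1) := ⟨i, rfl⟩
  rw [cycleEdgeLabel, dif_pos h, ← sym2_mk_add_one_injective hm h.choose_spec]

lemma cycleEdgeLabel_lt (hm : 3 ≤ m) {f : Fin m → ℕ} {d : ℕ} (hf : ∀ i, f i < d) :
    ∀ e ∈ (cycleGraph m).edgeSet, cycleEdgeLabel f e < d := by
  intro e he
  obtain ⟨i, rfl⟩ := exists_eq_of_mem_edgeSet_cycleGraph (by omega) he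
  rw [cycleEdgeLabel_mk hm]
  exact hf i

lemma isProperEdgeLabeling_cycleEdgeLabel (hm : 3 ≤ m) {f : Fin m → ℕ}
    (hf : ∀ i, f (i + 1) ≠ f i) : IsProperEdgeLabeling (cycleGraph m) (cycleEdgeLabel f) := by
  intro e he e' he' ⟨hne, v, hv, hv'⟩
  obtain ⟨i, rfl⟩ := exists_eq_of_mem_edgeSet_cycleGraph (by omega) he
  obtain ⟨j, rfl⟩ := exists_eq_of_mem_edgeSet_cycleGraph (by omega) he'
  rw [cycleEdgeLabel_mk hm, cycleEdgeLabel_mk hm]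
  simp only [Sym2.mem_iff] at hv hv'
  rcases hv with hvi | hvi <;> rcases hv' with hvj | hvj
  · exact absurd (by rw [← hvi, ← hvj]) hne
  · rw [← hvi, hvj]; exact hf j
  · rw [← hvj, hvi]; exact (hf i).symm
  · exact absurd (by rw [add_right_cancel (hvi.symm.trans hvj)]) hne

lemma apply_add_eq_of_preservesEdgeLabeling (hm : 3 ≤ m) {f : Fin m → ℕ}
    {φ : cycleGraph m ≃g cycleGraph m}
    (hφ : PreservesEdgeLabeling (cycleGraph m) φ (cycleEdgeLabel f))
    (hrot : ∀ v, φ v = φ 0 + v) (i : Fin m) : f (φ 0 + i) = f i := by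
  have h := hφ _ (cycleGraph_edge_mem (by omega) i)
  rwa [Sym2.map_mk, hrot, hrot (i + 1), ← add_assoc, cycleEdgeLabel_mk hm,
    cycleEdgeLabel_mk hm] at h

lemma apply_sub_sub_one_eq_of_preservesEdgeLabeling (hm : 3 ≤ m) {f : Fin m → ℕ}
    {φ : cycleGraph m ≃g cycleGraph m}
    (hφ : PreservesEdgeLabeling (cycleGraph m) φ (cycleEdgeLabel f))
    (hrefl : ∀ v, φ v = φ 0 - v) (i : Fin m) : f (φ 0 - i - 1) = f i := by
  have h := hφ _ (cycleGraph_edge_mem (by omega) i)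
  rwa [Sym2.map_mk, hrefl, hrefl (i + 1), Sym2.eq_swap, ← sub_sub,
    show φ 0 - i = φ 0 - i - 1 + 1 by ring, add_sub_cancel_right, cycleEdgeLabel_mk hm,
    cycleEdgeLabel_mk hm] at h

/-- The label `2` sits only on the edges `2` and `5`: a rotation preserving this pair is trivial
once `m ≥ 8`, and the only reflection swapping them exchanges the edges `3` and `4`, labelled `0`
and `1`. -/
def cyclePattern (k : ℕ) : ℕ := if k < 6 then k % 3 else k % 2

lemma cyclePattern_lt_three (k : ℕ) : cyclePattern k < 3 := by
  unfold cyclePattern; split_ifs <;> omega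

lemma cyclePattern_add_one_ne (hm : 6 ≤ m) (heven : Even m) (i : Fin m) :
    cyclePattern (i + 1).val ≠ cyclePattern i.val := by
  have hi := i.isLt
  rw [Fin.val_add, Fin.val_one', Nat.mod_eq_of_lt (show 1 < m by omega)]
  rw [Nat.even_iff] at heven
  rcases (show i.val + 1 < m ∨ i.val + 1 = m by omega) with h | h
  · rw [Nat.mod_eq_of_lt h]; unfold cyclePattern; split_ifs <;> omega
  · rw [h, Nat.mod_self]; unfold cyclePattern; split_ifs <;> omega

lemma cyclePattern_eq_two_iff (hm : 6 ≤ m) (i : Fin m) :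
    cyclePattern i.val = 2 ↔ i = 2 ∨ i = 5 := by
  rw [Fin.ext_iff, Fin.ext_iff, Fin.ofNat_val_of_lt 2 (by omega), Fin.ofNat_val_of_lt 5 (by omega)]
  unfold cyclePattern; split_ifs <;> omega

lemma isDistinguishingEdgeLabeling_cyclePattern (hm : 8 ≤ m) :
    IsDistinguishingEdgeLabeling (cycleGraph m) (cycleEdgeLabel fun i => cyclePattern i.val) := by
  intro φ hφ
  have h3 : (3 : Fin m) ≠ 0 := Fin.ofNat_ne_zero_of_lt 3 (by omega)
  have h6 : (6 : Fin m) ≠ 0 := Fin.ofNat_ne_zero_of_lt 6 (by omega)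
  have hval (k : ℕ) [k.AtLeastTwo] (hk : k < 8) :
      cyclePattern (OfNat.ofNat k : Fin m).val = cyclePattern k := by
    rw [Fin.ofNat_val_of_lt k (by omega)]
  have htwo := cyclePattern_eq_two_iff (m := m) (by omega)
  rcases cycleGraph_iso_eq_add_or_eq_sub (by omega) φ with hrot | hrefl
  · have hpat := apply_add_eq_of_preservesEdgeLabeling (by omega) hφ hrot
    have h2 := (htwo _).1 ((hpat 2).trans (hval 2 (by omega)))
    have h5 := (htwo _).1 ((hpat 5).trans (hval 5 (by omega)))
    have hφ0 : φ 0 = 0 := by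
      rcases h2 with h2 | h2 <;> rcases h5 with h5 | h5
      · exact (h3 (by linear_combination h5 - h2)).elim
      · linear_combination h2
      · exact (h6 (by linear_combination h5 - h2)).elim
      · exact (h3 (by linear_combination h5 - h2)).elim
    intro v
    rw [hrot, hφ0, zero_add]
  · exfalso
    have hpat := apply_sub_sub_one_eq_of_preservesEdgeLabeling (by omega) hφ hrefl
    have h2 := (htwo _).1 ((hpat 2).trans (hval 2 (by omega)))
    have h5 := (htwo _).1 ((hpat 5).trans (hval 5 (by omega)))
    rcases h2 with h2 | h2 <;> rcases h5 with h5 | h5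
    · exact h3 (by linear_combination h2 - h5)
    · exact h6 (by linear_combination h2 - h5)
    · have h4 : φ 0 - 3 - 1 = 4 := by linear_combination h2
      have := hpat 3
      rw [h4, hval 4 (by omega), hval 3 (by omega)] at this
      exact absurd this (by decide)
    · exact h3 (by linear_combination h2 - h5)

end Cycle

theorem stmt6 (n : ℕ) (hn : 4 ≤ n) :
    distChromIndex (SimpleGraph.cycleGraph (2 * n)) = 3 := by
  have : NeZero (2 * n) := ⟨by omega⟩
  exact distChromIndex_eq_succ (d := 2)
    (isProperEdgeLabeling_cycleEdgeLabel (by omega)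
      (cyclePattern_add_one_ne (by omega) (even_two_mul n)))
    (isDistinguishingEdgeLabeling_cyclePattern (by omega))
    (cycleEdgeLabel_lt (by omega) fun i => cyclePattern_lt_three i.val)
    fun c hc hd hlt => not_isDistinguishingEdgeLabeling_of_lt_two (by omega) hc hlt hd
end

section
/- The distinguishing chromatic index of the complete graph K_{2n} is 2n−1 for every n ≥ 3. -/
open SimpleGraph

/-! ### Auxiliary construction: the canonical 1-factorization coloring of `K_{2n}` -/

/-- The canonical coloring: edge `{i, j}` (both `< 2n-1`) gets color `i + j mod (2n-1)`,
edge `{i, ∞}` (where `∞` is the vertex `2n-1`) gets color `2i mod (2n-1)`. -/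
noncomputable def myC (n : ℕ) : Sym2 (Fin (2 * n)) → ℕ :=
  Sym2.lift ⟨fun a b =>
    if a.val = 2 * n - 1 then (2 * (b.val : ZMod (2 * n - 1))).val
    else if b.val = 2 * n - 1 then (2 * (a.val : ZMod (2 * n - 1))).val
    else (((a.val + b.val : ℕ) : ZMod (2 * n - 1))).val,
    by
      intro a b
      dsimp only
      split_ifs with h1 h2 h2 <;> first
        | rfl
        | (rw [h1, h2])
        | (rw [Nat.add_comm])⟩

lemma myC_eval_inf (n : ℕ) (a b : Fin (2 * n)) (ha : a.val = 2 * n - 1) :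
    myC n s(a, b) = (2 * (b.val : ZMod (2 * n - 1))).val := by
  simp [myC, ha]

lemma myC_eval_fin (n : ℕ) (a b : Fin (2 * n)) (ha : a.val ≠ 2 * n - 1) (hb : b.val ≠ 2 * n - 1) :
    myC n s(a, b) = (((a.val + b.val : ℕ) : ZMod (2 * n - 1))).val := by
  simp [myC, ha, hb]

lemma myC_lt (n : ℕ) (hn : 3 ≤ n) (e : Sym2 (Fin (2 * n))) : myC n e < 2 * n - 1 := by
  haveI : NeZero (2 * n - 1) := ⟨by omega⟩
  induction e using Sym2.ind with
  | _ a b =>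
    simp only [myC, Sym2.lift_mk]
    split_ifs <;> exact ZMod.val_lt _

/-- `2` is invertible modulo the odd number `2n - 1`. -/
lemma two_cancel (n : ℕ) (hn : 3 ≤ n) {x y : ZMod (2 * n - 1)} (h : 2 * x = 2 * y) : x = y := by
  have key : ((n : ℕ) : ZMod (2 * n - 1)) * 2 = 1 := by
    have h1 : ((2 * n : ℕ) : ZMod (2 * n - 1)) = ((2 * n - 1 : ℕ) : ZMod (2 * n - 1)) + 1 := by
      rw [← Nat.cast_add_one]; congr 1; omega
    have h2 : ((2 * n - 1 : ℕ) : ZMod (2 * n - 1)) = 0 := ZMod.natCast_self _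
    rw [h2, zero_add] at h1
    calc ((n : ℕ) : ZMod (2 * n - 1)) * 2 = ((2 * n : ℕ) : ZMod (2 * n - 1)) := by push_cast; ring
    _ = 1 := h1
  calc x = (((n : ℕ) : ZMod (2 * n - 1)) * 2) * x := by rw [key, one_mul]
  _ = ((n : ℕ) : ZMod (2 * n - 1)) * (2 * x) := by ring
  _ = ((n : ℕ) : ZMod (2 * n - 1)) * (2 * y) := by rw [h]
  _ = (((n : ℕ) : ZMod (2 * n - 1)) * 2) * y := by ring
  _ = y := by rw [key, one_mul]

lemma valcast (n : ℕ) (hn : 3 ≤ n) (a : Fin (2 * n)) (ha : a.val ≠ 2 * n - 1) :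
    ((a.val : ZMod (2 * n - 1))).val = a.val := ZMod.val_cast_of_lt (by omega)

lemma cast_inj_of_vals (n : ℕ) (hn : 3 ≤ n) (a b : Fin (2 * n)) (ha : a.val ≠ 2 * n - 1)
    (hb : b.val ≠ 2 * n - 1) (h : (a.val : ZMod (2 * n - 1)) = (b.val : ZMod (2 * n - 1))) :
    a = b := by
  have := congrArg ZMod.val h
  rw [valcast n hn a ha, valcast n hn b hb] at this
  exact Fin.ext this

lemma val_inj' (n : ℕ) (hn : 3 ≤ n) {x y : ZMod (2 * n - 1)} (h : x.val = y.val) : x = y := by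
  haveI : NeZero (2 * n - 1) := ⟨by omega⟩
  exact ZMod.val_injective _ h

/-- The canonical coloring is a proper edge labeling. -/
lemma myC_proper (n : ℕ) (hn : 3 ≤ n) :
    IsProperEdgeLabeling (⊤ : SimpleGraph (Fin (2 * n))) (myC n) := by
  rintro e he f hf ⟨hne, v, hve, hvf⟩
  obtain ⟨x, rfl⟩ := (Sym2.mem_iff_exists).mp hve
  obtain ⟨y, rfl⟩ := (Sym2.mem_iff_exists).mp hvf
  have hvx : v ≠ x := by simpa [SimpleGraph.mem_edgeSet] using he
  have hvy : v ≠ y := by simpa [SimpleGraph.mem_edgeSet] using hf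
  have hxy : x ≠ y := by
    intro h; exact hne (by rw [h])
  intro hC
  by_cases hv : v.val = 2 * n - 1
  · have hx : x.val ≠ 2 * n - 1 := fun h => hvx (Fin.ext (hv.trans h.symm))
    have hy : y.val ≠ 2 * n - 1 := fun h => hvy (Fin.ext (hv.trans h.symm))
    rw [myC_eval_inf n v x hv, myC_eval_inf n v y hv] at hC
    exact hxy (cast_inj_of_vals n hn x y hx hy (two_cancel n hn (val_inj' n hn hC)))
  · by_cases hx : x.val = 2 * n - 1
    · have hy : y.val ≠ 2 * n - 1 := fun h => hxy (Fin.ext (hx.trans h.symm))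
      rw [Sym2.eq_swap, myC_eval_inf n x v hx, myC_eval_fin n v y hv hy] at hC
      have h1 : (2 : ZMod (2*n-1)) * (v.val : ZMod (2*n-1)) =
          ((v.val + y.val : ℕ) : ZMod (2*n-1)) := val_inj' n hn hC
      push_cast at h1
      have : (v.val : ZMod (2*n-1)) = (y.val : ZMod (2*n-1)) := by linear_combination h1
      exact hvy (cast_inj_of_vals n hn v y hv hy this)
    · by_cases hy : y.val = 2 * n - 1
      · rw [Sym2.eq_swap (a := v) (b := y), myC_eval_inf n y v hy,
          myC_eval_fin n v x hv hx] at hC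
        have h1 : ((v.val + x.val : ℕ) : ZMod (2*n-1)) =
            (2 : ZMod (2*n-1)) * (v.val : ZMod (2*n-1)) := val_inj' n hn hC
        push_cast at h1
        have : (v.val : ZMod (2*n-1)) = (x.val : ZMod (2*n-1)) := by linear_combination -h1
        exact hvx (cast_inj_of_vals n hn v x hv hx this)
      · rw [myC_eval_fin n v x hv hx, myC_eval_fin n v y hv hy] at hC
        have h1 := val_inj' n hn hC
        push_cast at h1
        have : (x.val : ZMod (2*n-1)) = (y.val : ZMod (2*n-1)) := by linear_combination h1
        exact hxy (cast_inj_of_vals n hn x y hx hy this)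

/-- The canonical coloring is a distinguishing edge labeling. -/
lemma myC_disting (n : ℕ) (hn : 3 ≤ n) :
    IsDistinguishingEdgeLabeling (⊤ : SimpleGraph (Fin (2 * n))) (myC n) := by
  haveI : NeZero (2 * n - 1) := ⟨by omega⟩
  haveI : Fact (1 < 2 * n - 1) := ⟨by omega⟩
  intro φ hφ
  have hinj : Function.Injective (φ : Fin (2 * n) → Fin (2 * n)) := φ.toEquiv.injective
  have H : ∀ a b : Fin (2 * n), a ≠ b → myC n s(φ a, φ b) = myC n s(a, b) := by
    intro a b hab
    have he : s(a, b) ∈ (⊤ : SimpleGraph (Fin (2 * n))).edgeSet := by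
      simp [SimpleGraph.mem_edgeSet, hab]
    have := hφ s(a, b) he
    simpa using this
  set inf : Fin (2 * n) := ⟨2 * n - 1, by omega⟩ with hinf
  have hfix : φ inf = inf := by
    by_contra hb
    set b := φ inf with hbdef
    have hbval : b.val ≠ 2 * n - 1 := fun h => hb (Fin.ext h)
    set a := φ.symm inf with hadef
    have ha : φ a = inf := φ.apply_symm_apply inf
    have hane : a ≠ inf := by
      intro h; rw [h] at ha; exact hb ha
    have haval : a.val ≠ 2 * n - 1 := fun h => hane (Fin.ext h)
    -- step 1 : `φ` swaps `∞` and `b`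
    have e1 := H a inf hane
    rw [ha, ← hbdef] at e1
    rw [myC_eval_inf n inf b rfl] at e1
    rw [Sym2.eq_swap (a := a) (b := inf), myC_eval_inf n inf a rfl] at e1
    have hab : a = b :=
      cast_inj_of_vals n hn a b haval hbval (two_cancel n hn (val_inj' n hn e1.symm))
    have hphib : φ b = inf := hab ▸ ha
    -- special vertex `i` with `(i : ZMod (2n-1)) = b + 1`
    set z : ZMod (2 * n - 1) := (b.val : ZMod (2 * n - 1)) + 1 with hz
    have hzlt := ZMod.val_lt z
    set i : Fin (2 * n) := ⟨z.val, by omega⟩ with hi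
    have hival : i.val ≠ 2 * n - 1 := by
      show z.val ≠ 2 * n - 1; omega
    have hicast : (i.val : ZMod (2 * n - 1)) = (b.val : ZMod (2 * n - 1)) + 1 := by
      show ((z.val : ℕ) : ZMod (2 * n - 1)) = _
      rw [ZMod.natCast_val, ZMod.cast_id]
    have hib : i ≠ b := by
      intro h
      rw [h] at hicast
      have h01 : (1 : ZMod (2 * n - 1)) = 0 := by linear_combination -hicast
      exact one_ne_zero h01
    have hii : i ≠ inf := fun h => hival (congrArg Fin.val h)
    have hφi_ne_inf : φ i ≠ inf := by
      intro h; exact hib (hinj (h.trans hphib.symm))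
    have hφi_ne_b : φ i ≠ b := by
      intro h; exact hii (hinj (h.trans hbdef))
    have hφival : (φ i).val ≠ 2 * n - 1 := fun h => hφi_ne_inf (Fin.ext h)
    -- equation 1 : `φ i + b = 2 i`
    have e2 := H i inf hii
    rw [← hbdef, myC_eval_fin n (φ i) b hφival hbval,
      Sym2.eq_swap (a := i) (b := inf), myC_eval_inf n inf i rfl] at e2
    have E1 := val_inj' n hn e2
    push_cast at E1
    -- equation 2 : `2 φ i = i + b`
    have e3 := H i b hib
    rw [hphib, Sym2.eq_swap (a := φ i) (b := inf), myC_eval_inf n inf (φ i) rfl,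
      myC_eval_fin n i b hival hbval] at e3
    have E2 := val_inj' n hn e3
    push_cast at E2
    -- contradiction: `3 ≡ 0 mod (2n-1)` with `2n - 1 ≥ 5`
    have h30 : ((3 : ℕ) : ZMod (2 * n - 1)) = 0 := by
      push_cast
      linear_combination -2 * E1 + E2 - 3 * hicast
    have hdvd : (2 * n - 1) ∣ 3 := (ZMod.natCast_eq_zero_iff 3 (2 * n - 1)).mp h30
    have := Nat.le_of_dvd (by norm_num) hdvd
    omega
  intro v
  by_cases hv : v = inf
  · rw [hv, hfix]
  · have hvval : v.val ≠ 2 * n - 1 := fun h => hv (Fin.ext h)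
    have hφv_ne : φ v ≠ inf := fun h => hv (hinj (h.trans hfix.symm))
    have hφvval : (φ v).val ≠ 2 * n - 1 := fun h => hφv_ne (Fin.ext h)
    have e := H inf v (fun h => hv h.symm)
    rw [hfix, myC_eval_inf n inf (φ v) rfl, myC_eval_inf n inf v rfl] at e
    exact cast_inj_of_vals n hn (φ v) v hφvval hvval (two_cancel n hn (val_inj' n hn e))

/-- Lower bound: any proper edge labeling of `K_{2n}` needs at least `2n - 1` labels,
since the `2n - 1` edges at a fixed vertex are pairwise adjacent. -/
lemma lower_bound (n : ℕ) (hn : 3 ≤ n) (d : ℕ) (c : Sym2 (Fin (2 * n)) → ℕ)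
    (hp : IsProperEdgeLabeling (⊤ : SimpleGraph (Fin (2 * n))) c)
    (hb : ∀ e ∈ (⊤ : SimpleGraph (Fin (2 * n))).edgeSet, c e < d) : 2 * n - 1 ≤ d := by
  have hpos : 0 < 2 * n := by omega
  let v0 : Fin (2 * n) := ⟨0, hpos⟩
  have hcard := Finset.card_le_card_of_injOn (f := fun i => c s(v0, i))
    (s := Finset.univ.erase v0) (t := Finset.range d) ?_ ?_
  · rw [Finset.card_erase_of_mem (Finset.mem_univ v0), Finset.card_univ, Fintype.card_fin,
      Finset.card_range] at hcard
    omega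
  · intro i hi
    have hiv : i ≠ v0 := Finset.ne_of_mem_erase hi
    have hmem : s(v0, i) ∈ (⊤ : SimpleGraph (Fin (2 * n))).edgeSet := by
      simp only [SimpleGraph.mem_edgeSet, SimpleGraph.top_adj]
      exact fun h => hiv h.symm
    exact Finset.mem_range.mpr (hb _ hmem)
  · intro i hi j hj hij
    by_contra hne
    have hiv : i ≠ v0 := Finset.ne_of_mem_erase hi
    have hjv : j ≠ v0 := Finset.ne_of_mem_erase hj
    have hmi : s(v0, i) ∈ (⊤ : SimpleGraph (Fin (2 * n))).edgeSet := by
      simp only [SimpleGraph.mem_edgeSet, SimpleGraph.top_adj]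
      exact fun h => hiv h.symm
    have hmj : s(v0, j) ∈ (⊤ : SimpleGraph (Fin (2 * n))).edgeSet := by
      simp only [SimpleGraph.mem_edgeSet, SimpleGraph.top_adj]
      exact fun h => hjv h.symm
    exact hp _ hmi _ hmj ⟨fun h => hne (Sym2.congr_right.mp h),
      ⟨v0, Sym2.mem_mk_left _ _, Sym2.mem_mk_left _ _⟩⟩ hij

theorem stmt8 (n : ℕ) (hn : 3 ≤ n) :
    distChromIndex (⊤ : SimpleGraph (Fin (2 * n))) = 2 * n - 1 := by
  have hmem : 2 * n - 1 ∈ {d | ∃ c : Sym2 (Fin (2 * n)) → ℕ,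
      IsProperEdgeLabeling (⊤ : SimpleGraph (Fin (2 * n))) c ∧
      IsDistinguishingEdgeLabeling (⊤ : SimpleGraph (Fin (2 * n))) c ∧
      ∀ e ∈ (⊤ : SimpleGraph (Fin (2 * n))).edgeSet, c e < d} :=
    ⟨myC n, myC_proper n hn, myC_disting n hn, fun e _ => myC_lt n hn e⟩
  refine le_antisymm (Nat.sInf_le hmem) (le_csInf ⟨_, hmem⟩ ?_)
  rintro d ⟨c, hp, _, hbound⟩
  exact lower_bound n hn d c hp hbound
end

section
/- The distinguishing chromatic index of the friendship graph F_n is 2n for every n ≥ 3. -/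
open SimpleGraph

/-- The friendship graph `F n`: `n` triangles sharing a common central vertex `none`. -/
def friendshipGraph (n : ℕ) : SimpleGraph (Option (Fin n × Fin 2)) :=
  SimpleGraph.fromRel (fun x y =>
    x = none ∨ ∃ (i : Fin n) (a b : Fin 2), a ≠ b ∧ x = some (i, a) ∧ y = some (i, b))

/-!
A proper labeling gives the `2n` spokes at the centre distinct labels, so at least `2n` labels are
needed. Conversely, label the spokes injectively by `0, …, 2n - 1` and each base by a label absent
from its triangle. For `n ≥ 2` the centre is the only vertex of degree greater than `2`, so every
automorphism fixes it; an automorphism preserving the labels then fixes every spoke, hence every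
vertex.
-/

lemma isProperEdgeLabeling_iff_injOn_neighborSet {V : Type*} (G : SimpleGraph V) (c : Sym2 V → ℕ) :
    IsProperEdgeLabeling G c ↔ ∀ v, Set.InjOn (fun w => c s(v, w)) (G.neighborSet v) := by
  constructor
  · intro hc v w₁ hw₁ w₂ hw₂ hlab
    by_contra hne
    exact hc _ hw₁ _ hw₂ ⟨fun h => hne (Sym2.congr_right.mp h), v, Sym2.mem_mk_left _ _,
      Sym2.mem_mk_left _ _⟩ hlab
  · rintro hc e he f hf ⟨hne, v, hve, hvf⟩ hlab
    obtain ⟨w₁, rfl⟩ := Sym2.mem_iff_exists.mp hve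
    obtain ⟨w₂, rfl⟩ := Sym2.mem_iff_exists.mp hvf
    exact hne (congrArg _ (hc v he hf hlab))

lemma IsProperEdgeLabeling.ncard_neighborSet_le {V : Type*} {G : SimpleGraph V}
    {c : Sym2 V → ℕ} {d : ℕ} (hc : IsProperEdgeLabeling G c) (hd : ∀ e ∈ G.edgeSet, c e < d)
    (v : V) : (G.neighborSet v).ncard ≤ d := by
  simpa using Set.ncard_le_ncard_of_injOn (s := G.neighborSet v) (t := Set.Iio d)
    (fun w => c s(v, w)) (fun w hw => hd _ hw)
    ((isProperEdgeLabeling_iff_injOn_neighborSet G c).mp hc v)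

lemma IsProperEdgeLabeling.apply_eq_of_adj {V : Type*} {G : SimpleGraph V} {c : Sym2 V → ℕ}
    (hc : IsProperEdgeLabeling G c) {φ : G ≃g G} (hφ : PreservesEdgeLabeling G φ c) {v w : V}
    (hv : φ v = v) (hvw : G.Adj v w) : φ w = w := by
  have hlab := hφ s(v, w) hvw
  rw [Sym2.map_mk, hv] at hlab
  have hφw : G.Adj v (φ w) := hv ▸ φ.map_adj_iff.mpr hvw
  exact (isProperEdgeLabeling_iff_injOn_neighborSet G c).mp hc v hφw hvw hlab

lemma distChromIndex_eq_ncard_neighborSet {V : Type*} {G : SimpleGraph V} {c : Sym2 V → ℕ}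
    (hc : IsProperEdgeLabeling G c) (hD : IsDistinguishingEdgeLabeling G c) {v : V}
    (hlt : ∀ e ∈ G.edgeSet, c e < (G.neighborSet v).ncard) :
    distChromIndex G = (G.neighborSet v).ncard :=
  le_antisymm (Nat.sInf_le ⟨c, hc, hD, hlt⟩) <|
    le_csInf ⟨_, c, hc, hD, hlt⟩ fun _ ⟨_, hc', _, hd'⟩ => hc'.ncard_neighborSet_le hd' v

lemma SimpleGraph.Iso.ncard_neighborSet_apply {V W : Type*} {G : SimpleGraph V} {G' : SimpleGraph W}
    (φ : G ≃g G') (v : V) : (G'.neighborSet (φ v)).ncard = (G.neighborSet v).ncard := by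
  rw [← φ.image_neighborSet, Set.ncard_image_of_injective _ φ.injective]

namespace friendshipGraph

variable {n : ℕ}

lemma adj_none_iff (w : Option (Fin n × Fin 2)) :
    (friendshipGraph n).Adj none w ↔ w.isSome := by
  cases w <;> simp [friendshipGraph]

lemma adj_some_some {i j : Fin n} {a b : Fin 2} :
    (friendshipGraph n).Adj (some (i, a)) (some (j, b)) ↔ i = j ∧ a ≠ b := by
  grind [friendshipGraph, fromRel_adj]

lemma neighborSet_none : (friendshipGraph n).neighborSet none = Set.range some := by
  ext w
  cases w <;> simp [adj_none_iff]

lemma neighborSet_some (i : Fin n) (a : Fin 2) :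
    (friendshipGraph n).neighborSet (some (i, a)) = {none, some (i, a.rev)} := by
  ext (_ | ⟨j, b⟩)
  · simp [adj_comm, adj_none_iff]
  · simp only [mem_neighborSet, adj_some_some, Set.mem_insert_iff, Set.mem_singleton_iff,
      reduceCtorEq, Option.some.injEq, Prod.mk.injEq, false_or]
    fin_cases a <;> fin_cases b <;> simp [eq_comm]

lemma ncard_neighborSet_none : ((friendshipGraph n).neighborSet none).ncard = 2 * n := by
  rw [neighborSet_none, Set.ncard_range_of_injective (Option.some_injective _)]
  simp [mul_comm]

lemma ncard_neighborSet_some (i : Fin n) (a : Fin 2) :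
    ((friendshipGraph n).neighborSet (some (i, a))).ncard = 2 := by
  rw [neighborSet_some, Set.ncard_pair (by simp)]

lemma iso_apply_none (hn : 2 ≤ n) (φ : friendshipGraph n ≃g friendshipGraph n) :
    φ none = none := by
  cases h : φ none with
  | none => rfl
  | some p =>
    have := φ.ncard_neighborSet_apply none
    rw [h, ncard_neighborSet_some, ncard_neighborSet_none] at this
    omega

/-- Spoke `(i, a)` gets the label `a + 2 i`. The bases form a matching, so each may take any label
missing from its own triangle: `2` for triangle `0`, and `0` for the others. -/
def edgeLabel (n : ℕ) : Sym2 (Option (Fin n × Fin 2)) → ℕ :=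
  Sym2.lift ⟨fun
    | none, some p | some p, none => finProdFinEquiv p
    | some (i, _), some (j, _) => if (i : ℕ) + j = 0 then 2 else 0
    | none, none => 0, by rintro (_ | ⟨i, a⟩) (_ | ⟨j, b⟩) <;> simp [add_comm]⟩

lemma edgeLabel_spoke (p : Fin n × Fin 2) :
    edgeLabel n s(some p, none) = finProdFinEquiv p := rfl

lemma edgeLabel_base (i : Fin n) (a b : Fin 2) :
    edgeLabel n s(some (i, a), some (i, b)) = if (i : ℕ) = 0 then 2 else 0 := by
  simp [edgeLabel]

lemma isProperEdgeLabeling_edgeLabel : IsProperEdgeLabeling (friendshipGraph n) (edgeLabel n) := by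
  rw [isProperEdgeLabeling_iff_injOn_neighborSet]
  rintro (_ | ⟨i, a⟩)
  · rw [neighborSet_none]
    rintro _ ⟨p, rfl⟩ _ ⟨q, rfl⟩ h
    exact congrArg some (finProdFinEquiv.injective (Fin.ext h))
  · rw [neighborSet_some, Set.injOn_pair]
    intro h
    simp only [edgeLabel_spoke, edgeLabel_base, finProdFinEquiv_apply_val] at h
    split_ifs at h <;> omega

lemma edgeLabel_lt (hn : 2 ≤ n) :
    ∀ e ∈ (friendshipGraph n).edgeSet, edgeLabel n e < 2 * n := by
  refine Sym2.ind ?_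
  rintro (_ | ⟨i, a⟩) (_ | ⟨j, b⟩) he
  · simp at he
  · rw [Sym2.eq_swap, edgeLabel_spoke]
    have := (finProdFinEquiv (j, b)).isLt
    omega
  · rw [edgeLabel_spoke]
    have := (finProdFinEquiv (i, a)).isLt
    omega
  · obtain ⟨rfl, -⟩ := adj_some_some.mp he
    rw [edgeLabel_base]
    split_ifs <;> omega

lemma isDistinguishingEdgeLabeling_edgeLabel (hn : 2 ≤ n) :
    IsDistinguishingEdgeLabeling (friendshipGraph n) (edgeLabel n) := by
  intro φ hφ v
  have hnone := iso_apply_none hn φ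
  cases v with
  | none => exact hnone
  | some p =>
    exact isProperEdgeLabeling_edgeLabel.apply_eq_of_adj hφ hnone (by simp [adj_none_iff])

end friendshipGraph

theorem stmt11 (n : ℕ) (hn : 3 ≤ n) :
    distChromIndex (friendshipGraph n) = 2 * n := by
  have hn2 : 2 ≤ n := by omega
  rw [← friendshipGraph.ncard_neighborSet_none]
  refine distChromIndex_eq_ncard_neighborSet friendshipGraph.isProperEdgeLabeling_edgeLabel
    (friendshipGraph.isDistinguishingEdgeLabeling_edgeLabel hn2) ?_
  rw [friendshipGraph.ncard_neighborSet_none]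
  exact friendshipGraph.edgeLabel_lt hn2
end

section
/- Let G be a connected graph other than P_2, Q, L(Q), and let c be a proper distinguishing edge labeling of G. Then the vertex labeling of the line graph L(G) given by c'(e) = c(e) for each e ∈ V(L(G)) = E(G) is a proper distinguishing vertex labeling of L(G). -/
open SimpleGraph

/-- A proper vertex coloring: adjacent vertices receive different labels. -/
def IsProperVertexColoring {V : Type*} (G : SimpleGraph V) (c : V → ℕ) : Prop :=
  ∀ u v, G.Adj u v → c u ≠ c v

/-- A distinguishing vertex labeling: only the identity automorphism preserves it. -/
def IsDistinguishingVertexLabeling {V : Type*} (G : SimpleGraph V) (c : V → ℕ) : Prop :=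
  ∀ φ : G ≃g G, (∀ v, c (φ v) = c v) → ∀ v, φ v = v

/-- The distinguishing chromatic number `χ_D(G)`. -/
noncomputable def distChromNumber {V : Type*} (G : SimpleGraph V) : ℕ :=
  sInf {d | ∃ c : V → ℕ, IsProperVertexColoring G c ∧ IsDistinguishingVertexLabeling G c ∧
      ∀ v, c v < d}

theorem stmt14 {V : Type*} (G : SimpleGraph V) (hconn : G.Connected)
    (hsab : ∀ ψ : G.lineGraph ≃g G.lineGraph, ∃ φ : G ≃g G,
        ∀ e : G.edgeSet, (ψ e : Sym2 V) = Sym2.map φ (e : Sym2 V))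
    (c : Sym2 V → ℕ) (hc1 : IsProperEdgeLabeling G c)
    (hc2 : IsDistinguishingEdgeLabeling G c) :
    IsProperVertexColoring G.lineGraph (fun e => c (e : Sym2 V)) ∧
    IsDistinguishingVertexLabeling G.lineGraph (fun e => c (e : Sym2 V)) := by
  constructor
  · intro e f hadj
    obtain ⟨hne, v, hv⟩ := lineGraph_adj_iff_exists.mp hadj
    exact hc1 e e.2 f f.2 ⟨fun h => hne (Subtype.ext h), v, hv⟩
  · intro ψ hψ e
    obtain ⟨φ, hφ⟩ := hsab ψ
    have hid : ∀ v, φ v = v := by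
      apply hc2 φ
      intro f hf
      have h := hψ ⟨f, hf⟩
      simpa [hφ ⟨f, hf⟩] using h
    have hfun : (⇑φ : V → V) = id := funext hid
    apply Subtype.ext
    rw [hφ e, hfun, Sym2.map_id, id]
end

section
/- If G and H are connected graphs of orders n, m ≥ 3 respectively, then max{Δ(H)+n, Δ(G)+m} ≤ χ'_D(G+H) ≤ max{χ'_D(G), χ'_D(H)} + χ'_D(K_{n,m}). -/
open SimpleGraph

/-- The join `G + H` of two graphs. -/
def graphJoin {α β : Type*} (G : SimpleGraph α) (H : SimpleGraph β) : SimpleGraph (α ⊕ β) where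
  Adj x y :=
    Sum.elim (fun a => Sum.elim (fun b => G.Adj a b) (fun _ => True) y)
             (fun a => Sum.elim (fun _ => True) (fun b => H.Adj a b) y) x
  symm := by refine ⟨?_⟩; rintro (a|a) (b|b) h
             · exact h.symm
             · trivial
             · trivial
             · exact h.symm
  loopless := by refine ⟨?_⟩; rintro (a|a) h
                 · exact G.irrefl h
                 · exact H.irrefl h

/-!
Lower bound: a proper labeling of `G + H` gives distinct labels to the `deg_G a + m` edges at a
vertex `a` of `G`, and such a labeling attaining `χ'_D(G + H)` exists because in a connected graph
on at least three vertices an automorphism fixing every edge fixes every vertex.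

Upper bound: `G + H` is the union of `G ⊕ H` and `K_{n,m}`. Label `G` and `H` properly below
`A = max (χ'_D G) (χ'_D H)`, and `K_{n,m}` by a proper distinguishing labeling shifted by `A`.
An automorphism of `G + H` preserving these labels maps the cross edges, which are exactly the
edges labelled at least `A`, onto themselves; so it is an automorphism of `K_{n,m}` preserving
its labeling, hence the identity.
-/

namespace SimpleGraph

variable {V W : Type*}

lemma EdgesAdj.symm {e f : Sym2 V} (h : EdgesAdj e f) : EdgesAdj f e :=
  ⟨h.1.symm, h.2.imp fun _ hv => hv.symm⟩

lemma edgesAdj_map_iff {f : V → W} (hf : Function.Injective f) {e e' : Sym2 V} :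
    EdgesAdj (e.map f) (e'.map f) ↔ EdgesAdj e e' := by
  refine and_congr (Sym2.map.injective hf).ne_iff ⟨?_, ?_⟩
  · rintro ⟨_, hv, hv'⟩
    obtain ⟨v, hve, rfl⟩ := Sym2.mem_map.mp hv
    obtain ⟨v', hve', hvv'⟩ := Sym2.mem_map.mp hv'
    exact ⟨v, hve, hf hvv' ▸ hve'⟩
  · rintro ⟨v, hv, hv'⟩
    exact ⟨f v, Sym2.mem_map.mpr ⟨v, hv, rfl⟩, Sym2.mem_map.mpr ⟨v, hv', rfl⟩⟩

section FixingEdges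

variable {J : SimpleGraph V} {φ : J ≃g J}

lemma swap_of_map_edge_eq (hφ : ∀ e ∈ J.edgeSet, Sym2.map φ e = e) {u x : V}
    (hu : φ u ≠ u) (hux : J.Adj u x) : φ u = x ∧ φ x = u := by
  have h := hφ s(u, x) hux
  rw [Sym2.map_mk, Sym2.eq_iff] at h
  exact h.resolve_left fun h' => hu h'.1

lemma Connected.apply_eq_of_map_edge_eq [Fintype V] (hJ : J.Connected)
    (h3 : 3 ≤ Fintype.card V) (hφ : ∀ e ∈ J.edgeSet, Sym2.map φ e = e) (u : V) : φ u = u := by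
  classical
  by_contra hu
  obtain ⟨w, hw⟩ := Fintype.exists_ne_of_one_lt_card (by omega) u
  obtain ⟨x, hux⟩ : ∃ x, J.Adj u x := by
    obtain ⟨p⟩ := hJ.preconnected u w
    cases p with
    | nil => exact absurd rfl hw
    | cons h _ => exact ⟨_, h⟩
  obtain ⟨hφu, hφx⟩ := swap_of_map_edge_eq hφ hu hux
  -- `φ` swaps `u` and `x`, so no edge can leave `{u, x}`; but `J` has a third vertex.
  obtain ⟨z, hzu, hzx⟩ : ∃ z, z ≠ u ∧ z ≠ x := by
    by_contra! h
    have : (Finset.univ : Finset V) ⊆ {u, x} := fun z _ => by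
      by_cases hz : z = u
      · simp [hz]
      · simp [h z hz]
    have := (Finset.card_le_card this).trans Finset.card_le_two
    rw [Finset.card_univ] at this
    omega
  obtain ⟨p⟩ := hJ.preconnected u z
  obtain ⟨d, -, hd, hd'⟩ := p.exists_boundary_dart {u, x} (by simp) (by simp [hzu, hzx])
  rcases hd with hd | hd
  · have := (swap_of_map_edge_eq hφ hu (hd ▸ d.adj)).1
    exact hd' (Or.inr (this.symm.trans (hd ▸ hφu)))
  · have hx : φ x ≠ x := hφx ▸ hux.ne
    have := (swap_of_map_edge_eq hφ hx (hd ▸ d.adj)).1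
    exact hd' (Or.inl (this.symm.trans (hd ▸ hφx)))

end FixingEdges

section Labelings

variable {J : SimpleGraph V} {J' : SimpleGraph W} {c : Sym2 W → ℕ}

lemma IsProperEdgeLabeling.comp_iso (hc : IsProperEdgeLabeling J' c) (ψ : J ≃g J') :
    IsProperEdgeLabeling J (c ∘ Sym2.map ψ) := fun _ he _ hf hef =>
  hc _ (ψ.map_mem_edgeSet_iff.mpr he) _ (ψ.map_mem_edgeSet_iff.mpr hf)
    ((edgesAdj_map_iff ψ.injective).mpr hef)

lemma IsDistinguishingEdgeLabeling.comp_iso (hc : IsDistinguishingEdgeLabeling J' c)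
    (ψ : J ≃g J') : IsDistinguishingEdgeLabeling J (c ∘ Sym2.map ψ) := by
  intro φ hφ v
  have hconj : PreservesEdgeLabeling J' ((ψ.symm.trans φ).trans ψ) c := by
    intro e he
    have := hφ _ (ψ.symm.map_mem_edgeSet_iff.mpr he)
    simp only [Function.comp_apply, Sym2.map_map] at this ⊢
    convert this using 2 <;> ext <;> simp
  simpa using hc _ hconj (ψ v)

lemma exists_labeling_of_iso (ψ : J ≃g J') {d : ℕ}
    (h : ∃ c : Sym2 W → ℕ, IsProperEdgeLabeling J' c ∧ IsDistinguishingEdgeLabeling J' c ∧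
      ∀ e ∈ J'.edgeSet, c e < d) :
    ∃ c : Sym2 V → ℕ, IsProperEdgeLabeling J c ∧ IsDistinguishingEdgeLabeling J c ∧
      ∀ e ∈ J.edgeSet, c e < d := by
  obtain ⟨c, hp, hd, hlt⟩ := h
  exact ⟨c ∘ Sym2.map ψ, hp.comp_iso ψ, hd.comp_iso ψ,
    fun e he => hlt _ (ψ.map_mem_edgeSet_iff.mpr he)⟩

lemma distChromIndex_congr (ψ : J ≃g J') : distChromIndex J = distChromIndex J' :=
  congrArg sInf (Set.ext fun _ => ⟨exists_labeling_of_iso ψ.symm, exists_labeling_of_iso ψ⟩)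

lemma exists_labeling_lt_distChromIndex {d : ℕ}
    (h : ∃ c : Sym2 V → ℕ, IsProperEdgeLabeling J c ∧ IsDistinguishingEdgeLabeling J c ∧
      ∀ e ∈ J.edgeSet, c e < d) :
    ∃ c : Sym2 V → ℕ, IsProperEdgeLabeling J c ∧ IsDistinguishingEdgeLabeling J c ∧
      ∀ e ∈ J.edgeSet, c e < distChromIndex J :=
  Nat.sInf_mem (s := {d | ∃ c : Sym2 V → ℕ, IsProperEdgeLabeling J c ∧
    IsDistinguishingEdgeLabeling J c ∧ ∀ e ∈ J.edgeSet, c e < d}) ⟨d, h⟩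

lemma Connected.exists_labeling_lt_distChromIndex [Fintype V] (hJ : J.Connected)
    (h3 : 3 ≤ Fintype.card V) :
    ∃ c : Sym2 V → ℕ, IsProperEdgeLabeling J c ∧ IsDistinguishingEdgeLabeling J c ∧
      ∀ e ∈ J.edgeSet, c e < distChromIndex J := by
  classical
  let ι := Fintype.equivFin (Sym2 V)
  refine SimpleGraph.exists_labeling_lt_distChromIndex (d := Fintype.card (Sym2 V))
    ⟨fun e => ι e, ?_, ?_, ?_⟩
  · exact fun e _ f _ hef h => hef.1 (ι.injective (Fin.val_injective h))
  · exact fun φ hφ => hJ.apply_eq_of_map_edge_eq h3 fun e he =>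
      ι.injective (Fin.val_injective (hφ e he))
  · exact fun e _ => (ι e).isLt

end Labelings

section SupLabeling

variable {J₁ J₂ : SimpleGraph V} {c₁ c₂ : Sym2 V → ℕ} {A : ℕ}

open Classical in
noncomputable def supEdgeLabeling (J₂ : SimpleGraph V) (A : ℕ) (c₁ c₂ : Sym2 V → ℕ) :
    Sym2 V → ℕ :=
  fun e => if e ∈ J₂.edgeSet then A + c₂ e else c₁ e

lemma supEdgeLabeling_of_mem {e : Sym2 V} (he : e ∈ J₂.edgeSet) :
    supEdgeLabeling J₂ A c₁ c₂ e = A + c₂ e := if_pos he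

lemma supEdgeLabeling_of_not_mem {e : Sym2 V} (he : e ∉ J₂.edgeSet) :
    supEdgeLabeling J₂ A c₁ c₂ e = c₁ e := if_neg he

lemma le_supEdgeLabeling_iff (hA : ∀ e ∈ J₁.edgeSet, c₁ e < A) {e : Sym2 V}
    (he : e ∈ (J₁ ⊔ J₂).edgeSet) : A ≤ supEdgeLabeling J₂ A c₁ c₂ e ↔ e ∈ J₂.edgeSet := by
  by_cases h₂ : e ∈ J₂.edgeSet
  · simp [supEdgeLabeling_of_mem h₂, h₂]
  · have h₁ : e ∈ J₁.edgeSet := by simpa [edgeSet_sup, h₂] using he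
    simpa [supEdgeLabeling_of_not_mem h₂, h₂] using hA e h₁

lemma isProperEdgeLabeling_supEdgeLabeling (h₁ : IsProperEdgeLabeling J₁ c₁)
    (hA : ∀ e ∈ J₁.edgeSet, c₁ e < A) (h₂ : IsProperEdgeLabeling J₂ c₂) :
    IsProperEdgeLabeling (J₁ ⊔ J₂) (supEdgeLabeling J₂ A c₁ c₂) := by
  intro e he f hf hef hc
  have hiff := (le_supEdgeLabeling_iff hA he).symm.trans (hc ▸ le_supEdgeLabeling_iff hA hf)
  by_cases he₂ : e ∈ J₂.edgeSet
  · have hf₂ := hiff.mp he₂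
    rw [supEdgeLabeling_of_mem he₂, supEdgeLabeling_of_mem hf₂] at hc
    exact h₂ e he₂ f hf₂ hef (Nat.add_left_cancel hc)
  · have hf₂ := mt hiff.mpr he₂
    rw [supEdgeLabeling_of_not_mem he₂, supEdgeLabeling_of_not_mem hf₂] at hc
    exact h₁ e (by simpa [edgeSet_sup, he₂] using he) f (by simpa [edgeSet_sup, hf₂] using hf)
      hef hc

lemma isDistinguishingEdgeLabeling_supEdgeLabeling (hA : ∀ e ∈ J₁.edgeSet, c₁ e < A)
    (h₂ : IsDistinguishingEdgeLabeling J₂ c₂) :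
    IsDistinguishingEdgeLabeling (J₁ ⊔ J₂) (supEdgeLabeling J₂ A c₁ c₂) := by
  intro φ hφ
  -- `φ` maps `J₂`-edges exactly to `J₂`-edges, as these are the edges labelled at least `A`.
  have hmap : ∀ e ∈ (J₁ ⊔ J₂).edgeSet, Sym2.map φ e ∈ J₂.edgeSet ↔ e ∈ J₂.edgeSet := fun e he =>
    (le_supEdgeLabeling_iff hA (φ.map_mem_edgeSet_iff.mpr he)).symm.trans
      (hφ e he ▸ le_supEdgeLabeling_iff hA he)
  let ψ : J₂ ≃g J₂ := ⟨φ.toEquiv, fun {x y} => by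
    have hxy := hmap s(x, y)
    simp only [Sym2.map_mk, mem_edgeSet] at hxy
    exact ⟨fun h => (hxy (φ.map_adj_iff.mp (Or.inr h))).mp h,
      fun h => (hxy (Or.inr h)).mpr h⟩⟩
  refine h₂ ψ fun e he => ?_
  have he' : e ∈ (J₁ ⊔ J₂).edgeSet := by simp [edgeSet_sup, he]
  have := hφ e he'
  rwa [supEdgeLabeling_of_mem he, supEdgeLabeling_of_mem ((hmap e he').mpr he),
    Nat.add_left_cancel_iff] at this

lemma distChromIndex_sup_le {B : ℕ} (h₁ : IsProperEdgeLabeling J₁ c₁)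
    (hA : ∀ e ∈ J₁.edgeSet, c₁ e < A) (h₂ : IsProperEdgeLabeling J₂ c₂)
    (h₂' : IsDistinguishingEdgeLabeling J₂ c₂) (hB : ∀ e ∈ J₂.edgeSet, c₂ e < B) :
    distChromIndex (J₁ ⊔ J₂) ≤ A + B := by
  refine Nat.sInf_le ⟨supEdgeLabeling J₂ A c₁ c₂, isProperEdgeLabeling_supEdgeLabeling h₁ hA h₂,
    isDistinguishingEdgeLabeling_supEdgeLabeling hA h₂', fun e he => ?_⟩
  by_cases he₂ : e ∈ J₂.edgeSet
  · simpa [supEdgeLabeling_of_mem he₂] using hB e he₂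
  · rw [supEdgeLabeling_of_not_mem he₂]
    have := hA e (by simpa [edgeSet_sup, he₂] using he)
    omega

end SupLabeling

section SumLabeling

variable {α β : Type*} {G : SimpleGraph α} {H : SimpleGraph β} {cG : Sym2 α → ℕ}
  {cH : Sym2 β → ℕ}

def sumEdgeLabeling (cG : Sym2 α → ℕ) (cH : Sym2 β → ℕ) : Sym2 (α ⊕ β) → ℕ :=
  Sym2.lift ⟨fun x y => match x, y with
    | .inl a, .inl a' => cG s(a, a')
    | .inr b, .inr b' => cH s(b, b')
    | _, _ => 0, by rintro (a | b) (a' | b') <;> simp [Sym2.eq_swap]⟩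

@[simp] lemma sumEdgeLabeling_map_inl (e : Sym2 α) :
    sumEdgeLabeling cG cH (e.map Sum.inl) = cG e := by
  induction e using Sym2.ind; rfl

@[simp] lemma sumEdgeLabeling_map_inr (e : Sym2 β) :
    sumEdgeLabeling cG cH (e.map Sum.inr) = cH e := by
  induction e using Sym2.ind; rfl

lemma mem_edgeSet_sum {e : Sym2 (α ⊕ β)} (he : e ∈ (G ⊕g H).edgeSet) :
    (∃ e' ∈ G.edgeSet, e = e'.map Sum.inl) ∨ (∃ e' ∈ H.edgeSet, e = e'.map Sum.inr) := by
  induction e using Sym2.ind with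
  | _ x y =>
    rcases x with a | b <;> rcases y with a' | b'
    · exact Or.inl ⟨s(a, a'), he, rfl⟩
    · exact absurd he (not_adj_sum_inl_inr (G := G) (H := H) a b')
    · exact absurd he.symm (not_adj_sum_inl_inr (G := G) (H := H) a' b)
    · exact Or.inr ⟨s(b, b'), he, rfl⟩

lemma not_edgesAdj_map_inl_map_inr (e : Sym2 α) (f : Sym2 β) :
    ¬EdgesAdj (e.map Sum.inl) (f.map Sum.inr) := by
  rintro ⟨-, v, hv, hv'⟩
  obtain ⟨a, -, rfl⟩ := Sym2.mem_map.mp hv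
  obtain ⟨b, -, hb⟩ := Sym2.mem_map.mp hv'
  exact Sum.inr_ne_inl hb

lemma IsProperEdgeLabeling.sum (hG : IsProperEdgeLabeling G cG) (hH : IsProperEdgeLabeling H cH) :
    IsProperEdgeLabeling (G ⊕g H) (sumEdgeLabeling cG cH) := by
  intro e he f hf hef
  rcases mem_edgeSet_sum he with ⟨e, he', rfl⟩ | ⟨e, he', rfl⟩ <;>
    rcases mem_edgeSet_sum hf with ⟨f, hf', rfl⟩ | ⟨f, hf', rfl⟩
  · simpa using hG e he' f hf' ((edgesAdj_map_iff Sum.inl_injective).mp hef)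
  · exact absurd hef (not_edgesAdj_map_inl_map_inr e f)
  · exact absurd hef.symm (not_edgesAdj_map_inl_map_inr f e)
  · simpa using hH e he' f hf' ((edgesAdj_map_iff Sum.inr_injective).mp hef)

lemma sumEdgeLabeling_lt {A : ℕ} (hG : ∀ e ∈ G.edgeSet, cG e < A)
    (hH : ∀ e ∈ H.edgeSet, cH e < A) : ∀ e ∈ (G ⊕g H).edgeSet, sumEdgeLabeling cG cH e < A := by
  intro e he
  rcases mem_edgeSet_sum he with ⟨e, he', rfl⟩ | ⟨e, he', rfl⟩
  · simpa using hG e he'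
  · simpa using hH e he'

end SumLabeling

lemma IsProperEdgeLabeling.natCard_neighborSet_le {J : SimpleGraph V}
    {c : Sym2 V → ℕ} {d : ℕ} (hc : IsProperEdgeLabeling J c) (hd : ∀ e ∈ J.edgeSet, c e < d)
    (v : V) : Nat.card (J.neighborSet v) ≤ d := by
  let f : J.neighborSet v → Fin d := fun w => ⟨c s(v, w), hd _ w.2⟩
  have hf : Function.Injective f := fun w w' hww' => by
    by_contra hne
    exact hc _ w.2 _ w'.2 ⟨fun h => hne (Subtype.ext (Sym2.congr_right.mp h)), v,
      Sym2.mem_mk_left _ _, Sym2.mem_mk_left _ _⟩ (Fin.val_eq_of_eq hww')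
  simpa using Nat.card_le_card_of_injective f hf

lemma completeBipartiteGraph_connected (α β : Type*) [Nonempty α] [Nonempty β] :
    (completeBipartiteGraph α β).Connected := by
  have hK : ∀ a b, (completeBipartiteGraph α β).Reachable (.inl a) (.inr b) := fun a b =>
    Adj.reachable (by simp)
  obtain ⟨a₀⟩ := ‹Nonempty α›
  obtain ⟨b₀⟩ := ‹Nonempty β›
  refine ⟨fun x y => ?_⟩
  rcases x with a | b <;> rcases y with a' | b'
  · exact (hK a b₀).trans (hK a' b₀).symm
  · exact hK a b'
  · exact (hK a' b).symm
  · exact (hK a₀ b).symm.trans (hK a₀ b')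

section Join

variable {α β : Type*} (G : SimpleGraph α) (H : SimpleGraph β)

lemma graphJoin_eq_sum_sup : graphJoin G H = (G ⊕g H) ⊔ completeBipartiteGraph α β := by
  ext (a | b) (a' | b') <;> simp [graphJoin]

def graphJoinComm : graphJoin G H ≃g graphJoin H G :=
  ⟨Equiv.sumComm α β, by rintro (a | b) (a' | b') <;> rfl⟩

lemma neighborSet_graphJoin_inl (a : α) :
    (graphJoin G H).neighborSet (.inl a) = Sum.inl '' G.neighborSet a ∪ Set.range Sum.inr := by
  ext (a' | b) <;> simp [graphJoin]

lemma natCard_neighborSet_graphJoin_inl [Finite α] [Finite β] (a : α) :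
    Nat.card ((graphJoin G H).neighborSet (.inl a)) = Nat.card (G.neighborSet a) + Nat.card β := by
  rw [neighborSet_graphJoin_inl, Nat.card_coe_set_eq, Set.ncard_union_eq,
    Set.ncard_image_of_injective _ Sum.inl_injective,
    Set.ncard_range_of_injective Sum.inr_injective, Nat.card_coe_set_eq]
  exact Set.disjoint_left.mpr (by simp)

variable [Fintype α] [Fintype β]

lemma maxDegree_add_card_le_distChromIndex_graphJoin [DecidableRel G.Adj] [Nonempty α]
    [Nonempty β] (h3 : 3 ≤ Fintype.card α + Fintype.card β) :
    G.maxDegree + Fintype.card β ≤ distChromIndex (graphJoin G H) := by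
  have hconn : (graphJoin G H).Connected := by
    rw [graphJoin_eq_sum_sup]
    exact (completeBipartiteGraph_connected α β).mono le_sup_right
  obtain ⟨c, hc, -, hlt⟩ :=
    hconn.exists_labeling_lt_distChromIndex (by rwa [Fintype.card_sum])
  obtain ⟨a, ha⟩ := G.exists_maximal_degree_vertex
  have := hc.natCard_neighborSet_le hlt (.inl a)
  rwa [natCard_neighborSet_graphJoin_inl, Nat.card_eq_fintype_card, card_neighborSet_eq_degree,
    Nat.card_eq_fintype_card, ← ha] at this

lemma distChromIndex_graphJoin_le (hG : G.Connected) (hH : H.Connected)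
    (hn : 3 ≤ Fintype.card α) (hm : 3 ≤ Fintype.card β) :
    distChromIndex (graphJoin G H) ≤
      max (distChromIndex G) (distChromIndex H) + distChromIndex (completeBipartiteGraph α β) := by
  have : Nonempty α := Fintype.card_pos_iff.mp (by omega)
  have : Nonempty β := Fintype.card_pos_iff.mp (by omega)
  obtain ⟨cG, hGp, -, hGlt⟩ := hG.exists_labeling_lt_distChromIndex hn
  obtain ⟨cH, hHp, -, hHlt⟩ := hH.exists_labeling_lt_distChromIndex hm
  obtain ⟨cK, hKp, hKd, hKlt⟩ :=
    (completeBipartiteGraph_connected α β).exists_labeling_lt_distChromIndex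
      (by rw [Fintype.card_sum]; omega)
  rw [graphJoin_eq_sum_sup]
  exact distChromIndex_sup_le (hGp.sum hHp)
    (sumEdgeLabeling_lt (fun e he => (hGlt e he).trans_le (le_max_left _ _))
      (fun e he => (hHlt e he).trans_le (le_max_right _ _))) hKp hKd hKlt

end Join

end SimpleGraph

theorem stmt15 {α β : Type*} [Fintype α] [Fintype β]
    (G : SimpleGraph α) (H : SimpleGraph β) [DecidableRel G.Adj] [DecidableRel H.Adj]
    (hG : G.Connected) (hH : H.Connected)
    (hn : 3 ≤ Fintype.card α) (hm : 3 ≤ Fintype.card β) :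
    max (H.maxDegree + Fintype.card α) (G.maxDegree + Fintype.card β) ≤
      distChromIndex (graphJoin G H) ∧
    distChromIndex (graphJoin G H) ≤
      max (distChromIndex G) (distChromIndex H) +
        distChromIndex (completeBipartiteGraph (Fin (Fintype.card α)) (Fin (Fintype.card β))) := by
  have : Nonempty α := Fintype.card_pos_iff.mp (by omega)
  have : Nonempty β := Fintype.card_pos_iff.mp (by omega)
  have h3 : 3 ≤ Fintype.card α + Fintype.card β := by omega
  refine ⟨max_le ?_ (maxDegree_add_card_le_distChromIndex_graphJoin G H h3), ?_⟩
  · rw [distChromIndex_congr (graphJoinComm G H)]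
    exact maxDegree_add_card_le_distChromIndex_graphJoin H G (by omega)
  · rw [← distChromIndex_congr
      (completeBipartiteGraphCongr (Fintype.equivFin α) (Fintype.equivFin β))]
    exact distChromIndex_graphJoin_le G H hG hH hn hm
end

section
/- Let G and H be connected graphs with G ≠ K_1, and let G∘H be their corona product. Then for every automorphism f of G∘H, f maps the copy of G in G∘H onto itself (and its restriction is an automorphism of G), and f permutes the copies of H, restricting to isomorphisms between copies of H. -/
open SimpleGraph

/-- The corona product `G ∘ H`: one copy of `G` and, for each vertex `i` of `G`, a copy of `H`
whose vertices are all joined to `i`. -/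
def coronaProd {α β : Type*} (G : SimpleGraph α) (H : SimpleGraph β) :
    SimpleGraph (α ⊕ α × β) where
  Adj x y :=
    Sum.elim (fun v => Sum.elim (fun w => G.Adj v w) (fun p => v = p.1) y)
             (fun p => Sum.elim (fun w => p.1 = w) (fun q => p.1 = q.1 ∧ H.Adj p.2 q.2) y) x
  symm := by constructor; rintro (v|p) (w|q) h
             · exact h.symm
             · exact h.symm
             · exact h.symm
             · exact ⟨h.1.symm, h.2.symm⟩
  loopless := by constructor; rintro (v|p) h
                 · exact G.loopless.irrefl v h
                 · exact H.loopless.irrefl p.2 h.2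

/-!
A vertex `v` of `G` has degree `deg_G v + |H|` in `G ∘ H`, while a vertex `w` of a copy of `H`
has degree `deg_H w + 1 ≤ |H|`. When `G` has no isolated vertex the two kinds of vertices are
therefore told apart by their degrees, so an isomorphism of corona products maps `G` to `G` and
copies of `H` to copies of `H`. Since the `i`-th copy of `H` is exactly the set of non-`G`
neighbours of `i`, the copy of `H` at `i` goes to the copy at the image of `i`.
-/

namespace Equiv

variable {α α' β β' : Type*}

theorem exists_eq_sumCongr_of_isLeft (e : α ⊕ β ≃ α' ⊕ β')
    (he : ∀ x, (e x).isLeft = x.isLeft) :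
    ∃ (e₁ : α ≃ α') (e₂ : β ≃ β'), e = sumCongr e₁ e₂ := by
  refine ⟨sumIsLeft.symm.trans <| (e.subtypeEquiv (q := (·.isLeft)) fun x => by rw [he]).trans
      sumIsLeft,
    sumIsRight.symm.trans <| (e.subtypeEquiv (q := (·.isRight)) fun x => ?_).trans sumIsRight, ?_⟩
  · rw [← Sum.not_isLeft, ← Sum.not_isLeft, he]
  · ext (a | b) <;> simp

theorem exists_eq_prodShear_of_fst (e : α × β ≃ α' × β') (e₁ : α ≃ α')
    (he : ∀ p, (e p).1 = e₁ p.1) :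
    ∃ h : α → β ≃ β', e = e₁.prodShear h := by
  have hbij (i : α) : Function.Bijective fun w => (e (i, w)).2 := by
    refine ⟨fun w w' hw => ?_, fun w' => ?_⟩
    · have := e.injective (Prod.ext (by rw [he, he]) hw)
      exact (Prod.mk.inj this).2
    · obtain ⟨⟨j, w⟩, hjw⟩ := e.surjective (e₁ i, w')
      have hj : j = i := e₁.injective (by simpa [hjw] using (he (j, w)).symm)
      subst hj
      exact ⟨w, by simp [hjw]⟩
  exact ⟨fun i => ofBijective _ (hbij i), by ext p <;> simp [he]⟩

end Equiv

namespace coronaProd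

variable {α α' β : Type*} {G : SimpleGraph α} {G' : SimpleGraph α'} {H : SimpleGraph β}

@[simp] theorem adj_inl_inl {v w : α} : (coronaProd G H).Adj (.inl v) (.inl w) ↔ G.Adj v w :=
  Iff.rfl

@[simp] theorem adj_inl_inr {v : α} {p : α × β} :
    (coronaProd G H).Adj (.inl v) (.inr p) ↔ v = p.1 :=
  Iff.rfl

@[simp] theorem adj_inr_inl {p : α × β} {v : α} :
    (coronaProd G H).Adj (.inr p) (.inl v) ↔ p.1 = v :=
  Iff.rfl

@[simp] theorem adj_inr_inr {p q : α × β} :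
    (coronaProd G H).Adj (.inr p) (.inr q) ↔ p.1 = q.1 ∧ H.Adj p.2 q.2 :=
  Iff.rfl

variable (G H) in
def neighborSetInlEquiv (v : α) :
    (coronaProd G H).neighborSet (.inl v) ≃ G.neighborSet v ⊕ β where
  toFun
    | ⟨.inl w, h⟩ => .inl ⟨w, h⟩
    | ⟨.inr p, _⟩ => .inr p.2
  invFun
    | .inl ⟨w, h⟩ => ⟨.inl w, h⟩
    | .inr b => ⟨.inr (v, b), rfl⟩
  left_inv := by
    rintro ⟨(w | ⟨u, b⟩), h⟩
    · rfl
    · cases (show v = u from h)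
      rfl
  right_inv := by rintro (⟨w, h⟩ | b) <;> rfl

variable (G H) in
def neighborSetInrEquiv (p : α × β) :
    (coronaProd G H).neighborSet (.inr p) ≃ Option (H.neighborSet p.2) where
  toFun
    | ⟨.inl _, _⟩ => none
    | ⟨.inr q, h⟩ => some ⟨q.2, h.2⟩
  invFun
    | none => ⟨.inl p.1, rfl⟩
    | some ⟨w, h⟩ => ⟨.inr (p.1, w), rfl, h⟩
  left_inv := by
    rintro ⟨(w | ⟨u, b⟩), h⟩
    · cases (show p.1 = w from h)
      rfl
    · cases (show p.1 = u from h.1)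
      rfl
  right_inv := by rintro (_ | ⟨w, h⟩) <;> rfl

theorem encard_neighborSet_inl (v : α) :
    ((coronaProd G H).neighborSet (.inl v)).encard = (G.neighborSet v).encard + ENat.card β := by
  rw [← ENat.card_coe_set_eq, ENat.card_congr (neighborSetInlEquiv G H v), ENat.card_sum,
    ENat.card_coe_set_eq]

theorem encard_neighborSet_inr (p : α × β) :
    ((coronaProd G H).neighborSet (.inr p)).encard = (H.neighborSet p.2).encard + 1 := by
  rw [← ENat.card_coe_set_eq, ENat.card_congr (neighborSetInrEquiv G H p),
    ENat.card_congr (Equiv.optionEquivSumPUnit.{0} _), ENat.card_sum, ENat.card_coe_set_eq]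
  simp

theorem encard_neighborSet_inr_lt_inl [Finite β] {v : α} (hv : ∃ w, G.Adj v w) (p : α' × β) :
    ((coronaProd G' H).neighborSet (.inr p)).encard <
      ((coronaProd G H).neighborSet (.inl v)).encard := by
  have hH : (H.neighborSet p.2).encard < ENat.card β :=
    (Set.toFinite _).encard_lt_card <|
      (Set.ne_univ_iff_exists_notMem _).mpr ⟨p.2, H.notMem_neighborSet_self⟩
  have hG : 1 ≤ (G.neighborSet v).encard := Set.one_le_encard_iff_nonempty.mpr hv
  rw [encard_neighborSet_inr, encard_neighborSet_inl]
  calc (H.neighborSet p.2).encard + 1 < ENat.card β + 1 :=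
      (ENat.add_lt_add_iff_right ENat.one_ne_top).mpr hH
    _ ≤ (G.neighborSet v).encard + ENat.card β := by
      rw [add_comm]; exact add_le_add_left hG _

theorem iso_apply_inl_ne_inr [Finite β] (hG : ∀ v, ∃ w, G.Adj v w)
    (f : coronaProd G H ≃g coronaProd G' H) (v : α) (p : α' × β) : f (.inl v) ≠ .inr p := by
  intro hf
  have hdeg := ENat.card_congr (f.mapNeighborSet (.inl v))
  rw [hf, ENat.card_coe_set_eq, ENat.card_coe_set_eq] at hdeg
  exact (encard_neighborSet_inr_lt_inl (hG v) p).ne' hdeg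

theorem isLeft_iso_apply [Finite β] (hG : ∀ v, ∃ w, G.Adj v w) (hG' : ∀ v, ∃ w, G'.Adj v w)
    (f : coronaProd G H ≃g coronaProd G' H) (x : α ⊕ α × β) : (f x).isLeft = x.isLeft := by
  rcases x with v | p
  · cases hf : f (.inl v) with
    | inl => rfl
    | inr q => exact absurd hf (iso_apply_inl_ne_inr hG f v q)
  · cases hf : f (.inr p) with
    | inl w => exact absurd (f.symm_apply_eq.mpr hf.symm) (iso_apply_inl_ne_inr hG' f.symm w p)
    | inr => rfl

theorem exists_factor_isos_of_iso [Finite β] (hG : ∀ v, ∃ w, G.Adj v w) (hG' : ∀ v, ∃ w, G'.Adj v w)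
    (f : coronaProd G H ≃g coronaProd G' H) :
    ∃ (g : G ≃g G') (h : α → H ≃g H),
      (∀ v, f (.inl v) = .inl (g v)) ∧ ∀ i w, f (.inr (i, w)) = .inr (g i, h i w) := by
  obtain ⟨e₁, e₂, hf⟩ := Equiv.exists_eq_sumCongr_of_isLeft f.toEquiv (isLeft_iso_apply hG hG' f)
  have hl (v : α) : f (.inl v) = .inl (e₁ v) := DFunLike.congr_fun hf (.inl v)
  have hr (p : α × β) : f (.inr p) = .inr (e₂ p) := DFunLike.congr_fun hf (.inr p)
  obtain ⟨h, rfl⟩ := Equiv.exists_eq_prodShear_of_fst e₂ e₁ fun p => by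
    have hp : (coronaProd G H).Adj (.inr p) (.inl p.1) := adj_inr_inl.mpr rfl
    simpa [hl, hr] using f.map_adj_iff.mpr hp
  refine ⟨⟨e₁, ?_⟩, fun i => ⟨h i, ?_⟩, hl, fun i w => hr (i, w)⟩
  · intro a b
    simpa [hl] using f.map_adj_iff (v := .inl a) (w := .inl b)
  · intro a b
    simpa [hr] using f.map_adj_iff (v := .inr (i, a)) (w := .inr (i, b))

end coronaProd

theorem stmt16_general {α β : Type*} [Fintype β]
    (G : SimpleGraph α) (H : SimpleGraph β)
    (hG : G.Connected) (hK1 : Nontrivial α)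
    (f : coronaProd G H ≃g coronaProd G H) :
    (∃ g : G ≃g G, ∀ v : α, f (Sum.inl v) = Sum.inl (g v)) ∧
    (∃ σ : Equiv.Perm α, ∀ i : α, ∃ h : H ≃g H,
        ∀ w : β, f (Sum.inr (i, w)) = Sum.inr (σ i, h w)) := by
  have hadj : ∀ v, ∃ w, G.Adj v w := hG.preconnected.exists_adj_of_nontrivial
  obtain ⟨g, h, hl, hr⟩ := coronaProd.exists_factor_isos_of_iso hadj hadj f
  exact ⟨⟨g, hl⟩, g.toEquiv, fun i => ⟨h i, hr i⟩⟩

theorem stmt16 {α β : Type*} [Fintype α] [Fintype β]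
    (G : SimpleGraph α) (H : SimpleGraph β)
    (hG : G.Connected) (hH : H.Connected) (hK1 : Nontrivial α)
    (f : coronaProd G H ≃g coronaProd G H) :
    (∃ g : G ≃g G, ∀ v : α, f (Sum.inl v) = Sum.inl (g v)) ∧
    (∃ σ : Equiv.Perm α, ∀ i : α, ∃ h : H ≃g H,
        ∀ w : β, f (Sum.inr (i, w)) = Sum.inr (σ i, h w)) :=
  stmt16_general G H hG hK1 f
end
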